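/- arXiv:1907.11415 — 3 statements merged into one kernel-verified Lean document; each statement's English description precedes it below -/
import Mathlib

section
/- Let T be a semistandard multiset-valued tableau of shape λ with entries at most n, and suppose the crystal operator f_i applied to T is nonzero. Then the reading word of f_i T equals f_i applied to the reading word of T; that is, the entry i changed to i+1 does not change its position in the reading word. -/
/-! Signature rule on words: `+` for letter `i`, `-` for letter `i+1`,
cancel ordered pairs `-+`, leaving `+^p -^m`. -/

/-- Scanning left to right, returns (number of uncanceled `+`, number of uncanceled `-`). -/
def sigFold (i : ℕ) (w : List ℕ) : ℕ × ℕ :=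
  w.foldl (fun pm a =>
    if a = i then (if 0 < pm.2 then (pm.1, pm.2 - 1) else (pm.1 + 1, pm.2))
    else if a = i + 1 then (pm.1, pm.2 + 1) else pm) (0, 0)

/-- Position of the rightmost uncanceled `+` (a letter `i`). -/
def fPos (i : ℕ) (w : List ℕ) : Option ℕ :=
  ((List.range w.length).filter
    (fun j => decide (w[j]? = some i ∧ (sigFold i (w.take j)).2 = 0))).getLast?

/-- Position of the leftmost uncanceled `-` (a letter `i+1`). -/
def ePos (i : ℕ) (w : List ℕ) : Option ℕ :=
  ((List.range w.length).filter
    (fun j => decide (w[j]? = some (i + 1) ∧ (sigFold i (w.drop (j + 1))).1 = 0))).head?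

/-- The crystal operator `f_i` on words: change the `i` at the rightmost uncanceled `+`
into an `i+1`. -/
def fWord (i : ℕ) (w : List ℕ) : Option (List ℕ) :=
  (fPos i w).map (fun j => w.set j (i + 1))

/-- The crystal operator `e_i` on words: change the `i+1` at the leftmost uncanceled `-`
into an `i`. -/
def eWord (i : ℕ) (w : List ℕ) : Option (List ℕ) :=
  (ePos i w).map (fun j => w.set j i)

/-! Multiset-valued tableaux. -/

/-- `sh` is a partition: weakly decreasing list of positive integers. -/
def IsPartition (sh : List ℕ) : Prop :=
  sh.Pairwise (· ≥ ·) ∧ ∀ x ∈ sh, 0 < x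

/-- The box in row `r`, column `c` (both 0-indexed) belongs to the Young diagram of `sh`. -/
abbrev InShape (sh : List ℕ) (r c : ℕ) : Prop := c < sh.getD r 0

/-- A (semistandard) multiset-valued tableau of shape `sh` with entries in `{1, …, n}`:
every box of the shape is filled with a finite nonempty multiset, rows weakly increase
(max of a box ≤ min of the box to its right) and columns strictly increase. -/
def IsMVT (n : ℕ) (sh : List ℕ) (T : ℕ → ℕ → Multiset ℕ) : Prop :=
  (∀ r c, InShape sh r c → T r c ≠ 0) ∧
  (∀ r c, ¬ InShape sh r c → T r c = 0) ∧
  (∀ r c, ∀ x ∈ T r c, 1 ≤ x ∧ x ≤ n) ∧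
  (∀ r c, InShape sh r (c + 1) → ∀ x ∈ T r c, ∀ y ∈ T r (c + 1), x ≤ y) ∧
  (∀ r c, InShape sh (r + 1) c → ∀ x ∈ T r c, ∀ y ∈ T (r + 1) c, x < y)

/-- Number of boxes in column `c` of the shape `sh`. -/
def colHeight (sh : List ℕ) (c : ℕ) : ℕ := (sh.filter (fun p => decide (c < p))).length

/-- Sort a multiset increasingly into a list. -/
def msort (M : Multiset ℕ) : List ℕ := M.sort (· ≤ ·)

/-- Column reading word: the smallest entry of each box from bottom to top, then the
remaining entries of each box, smallest to largest, boxes top to bottom. -/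
def colWord (sh : List ℕ) (T : ℕ → ℕ → Multiset ℕ) (c : ℕ) : List ℕ :=
  ((List.range (colHeight sh c)).reverse.map (fun r => (msort (T r c)).take 1)).flatten
    ++ ((List.range (colHeight sh c)).map (fun r => (msort (T r c)).drop 1)).flatten

/-- The boxes corresponding to the letters of `colWord`, in order. -/
def colBoxes (sh : List ℕ) (T : ℕ → ℕ → Multiset ℕ) (c : ℕ) : List (ℕ × ℕ) :=
  ((List.range (colHeight sh c)).reverse.map
      (fun r => ((msort (T r c)).take 1).map (fun _ => (r, c)))).flatten
    ++ ((List.range (colHeight sh c)).map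
      (fun r => ((msort (T r c)).drop 1).map (fun _ => (r, c)))).flatten

/-- The reading word of a multiset-valued tableau: column reading words, columns left to right. -/
def mvtWord (sh : List ℕ) (T : ℕ → ℕ → Multiset ℕ) : List ℕ :=
  ((List.range (sh.headD 0)).map (colWord sh T)).flatten

/-- The boxes corresponding to the letters of `mvtWord`, in order. -/
def mvtBoxes (sh : List ℕ) (T : ℕ → ℕ → Multiset ℕ) : List (ℕ × ℕ) :=
  ((List.range (sh.headD 0)).map (colBoxes sh T)).flatten

/-- The crystal operator `f_i` on multiset-valued tableaux: act on the box `b` of the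
rightmost uncanceled `+`; if the box below `b` contains an `i+1`, move the `i` from `b`
to an `i+1` in that box, otherwise replace the `i` in `b` by an `i+1`. -/
def mvtF (sh : List ℕ) (i : ℕ) (T : ℕ → ℕ → Multiset ℕ) :
    Option (ℕ → ℕ → Multiset ℕ) :=
  (fPos i (mvtWord sh T)).map (fun j =>
    let rc := (mvtBoxes sh T).getD j (0, 0)
    let r := rc.1
    let c := rc.2
    if (i + 1) ∈ T (r + 1) c then
      fun r' c' =>
        if r' = r ∧ c' = c then T r c - {i}
        else if r' = r + 1 ∧ c' = c then T (r + 1) c + {i + 1}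
        else T r' c'
    else
      fun r' c' => if r' = r ∧ c' = c then (T r c - {i}) + {i + 1} else T r' c')

/-- The crystal operator `e_i` on multiset-valued tableaux: act on the box `b` of the
leftmost uncanceled `-`; if the box above `b` contains an `i`, move the `i+1` from `b`
to an `i` in that box, otherwise replace the `i+1` in `b` by an `i`. -/
def mvtE (sh : List ℕ) (i : ℕ) (T : ℕ → ℕ → Multiset ℕ) :
    Option (ℕ → ℕ → Multiset ℕ) :=
  (ePos i (mvtWord sh T)).map (fun j =>
    let rc := (mvtBoxes sh T).getD j (0, 0)
    let r := rc.1
    let c := rc.2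
    if 0 < r ∧ i ∈ T (r - 1) c then
      fun r' c' =>
        if r' = r ∧ c' = c then T r c - {i + 1}
        else if r' = r - 1 ∧ c' = c then T (r - 1) c + {i}
        else T r' c'
    else
      fun r' c' => if r' = r ∧ c' = c then (T r c - {i + 1}) + {i} else T r' c')

/-- A multiset-valued tableau is highest weight if it is killed by all raising operators. -/
def MvtHW (sh : List ℕ) (T : ℕ → ℕ → Multiset ℕ) : Prop :=
  ∀ i, 1 ≤ i → mvtE sh i T = none

/-!
Tag every letter of the reading word with its box. Let `b = (r, c)` be the box of the letter
chosen by `f_i`. Between the smallest entry of `b` and its remaining entries the reading word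
visits only boxes above `b` in column `c`, whose entries are smaller than `i` by column
strictness. So no `i + 1` is read between any `i` of `b` and the last `i` of `b`, and the
rightmost uncanceled `i` is the last `i` of `b` in reading order; raising that entry of `b` to
`i + 1` changes exactly this letter.

If the box below `b` contains `i + 1`, that `i + 1` is its smallest entry, read immediately
before the smallest entry of `b`; so `b ≠ {i}`, and the `i` is the last letter of the tail of
`b`, read just before the tail of the box below. Moving it down as an `i + 1` to the front of
that tail therefore gives the same word as raising it in place.
-/

section Lists

theorem range_eq_append_cons {k n : ℕ} (h : k < n) :
    List.range n = List.range k ++ k :: List.range' (k + 1) (n - (k + 1)) := by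
  obtain ⟨m, rfl⟩ := Nat.exists_eq_add_of_lt h
  have happ := List.range'_append_1 (s := 0) (m := k) (n := m + 1)
  rw [Nat.zero_add, List.range'_succ] at happ
  rw [List.range_eq_range', List.range_eq_range', show k + m + 1 - (k + 1) = m by omega, happ,
    Nat.add_assoc]

theorem exists_take_one_append_drop_one {α : Type*} (A B M : List α) (x y : α) :
    ∃ X Y, (∀ P Q : List α,
        P ++ (A ++ x :: B).take 1 ++ M ++ (A ++ x :: B).drop 1 ++ Q = P ++ X ++ x :: (Y ++ Q) ∧
        P ++ (A ++ y :: B).take 1 ++ M ++ (A ++ y :: B).drop 1 ++ Q = P ++ X ++ y :: (Y ++ Q)) ∧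
      (∀ z ∈ X, z ∈ A ∨ z ∈ M) ∧ ∀ z ∈ Y, z ∈ M ∨ z ∈ B := by
  cases A with
  | nil => exact ⟨[], M ++ B, fun P Q => by simp, by simp, fun z => List.mem_append.1⟩
  | cons a A =>
    refine ⟨a :: (M ++ A), B, fun P Q => by simp, fun z hz => ?_, fun z hz => .inr hz⟩
    simp only [List.mem_cons, List.mem_append] at hz ⊢
    tauto

theorem exists_eq_append_cons_of_pairwise {α : Type*} [LinearOrder α] :
    ∀ {s : List α}, s.Pairwise (· ≤ ·) → ∀ {x : α}, x ∈ s →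
      ∃ A B, s = A ++ x :: B ∧ ∀ b ∈ B, x < b
  | a :: s, hs, x, hx => by
    rw [List.pairwise_cons] at hs
    by_cases hxs : x ∈ s
    · obtain ⟨A, B, rfl, hB⟩ := exists_eq_append_cons_of_pairwise hs.2 hxs
      exact ⟨a :: A, B, rfl, hB⟩
    · obtain rfl : x = a := (List.mem_cons.1 hx).resolve_right hxs
      exact ⟨[], s, rfl, fun b hb => (hs.1 b hb).lt_of_ne fun h => hxs (h ▸ hb)⟩

end Lists

section SortedMultisets

theorem msort_pairwise (M : Multiset ℕ) : (msort M).Pairwise (· ≤ ·) :=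
  Multiset.pairwise_sort ..

theorem mem_msort {M : Multiset ℕ} {x : ℕ} : x ∈ msort M ↔ x ∈ M :=
  Multiset.mem_sort _

theorem msort_eq_of_pairwise {M : Multiset ℕ} {l : List ℕ} (hl : (l : Multiset ℕ) = M)
    (hs : l.Pairwise (· ≤ ·)) : msort M = l :=
  List.Perm.eq_of_pairwise' (msort_pairwise M) hs
    (Multiset.coe_eq_coe.1 (by rw [hl, msort, Multiset.sort_eq]))

theorem msort_sub_singleton {M : Multiset ℕ} {A B : List ℕ} {x : ℕ}
    (h : msort M = A ++ x :: B) : msort (M - {x}) = A ++ B := by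
  have hM : ((A ++ x :: B : List ℕ) : Multiset ℕ) = M := by rw [← h, msort, Multiset.sort_eq]
  have hs := h ▸ msort_pairwise M
  refine msort_eq_of_pairwise ?_
    (hs.sublist ((List.Sublist.refl A).append (List.sublist_cons_self x B)))
  rw [← hM, Multiset.coe_eq_coe.2 List.perm_middle, Multiset.sub_singleton, ← Multiset.cons_coe,
    Multiset.erase_cons_head]

theorem msort_add_singleton {N : Multiset ℕ} {A B : List ℕ} {y : ℕ}
    (h : msort N = A ++ B) (hA : ∀ a ∈ A, a ≤ y) (hB : ∀ b ∈ B, y ≤ b) :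
    msort (N + {y}) = A ++ y :: B := by
  have hN : ((A ++ B : List ℕ) : Multiset ℕ) = N := by rw [← h, msort, Multiset.sort_eq]
  have hs := h ▸ msort_pairwise N
  refine msort_eq_of_pairwise ?_ ?_
  · rw [← hN, Multiset.coe_eq_coe.2 List.perm_middle, ← Multiset.cons_coe, ← Multiset.singleton_add,
      add_comm]
  · rw [List.pairwise_append] at hs ⊢
    refine ⟨hs.1, List.pairwise_cons.2 ⟨hB, hs.2.1⟩, fun a ha b hb => ?_⟩
    rcases List.mem_cons.1 hb with rfl | hb
    exacts [hA a ha, hs.2.2 a ha b hb]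

theorem msort_eq_cons_of_forall_le {N : Multiset ℕ} {x : ℕ} (hx : x ∈ N)
    (h : ∀ y ∈ N, x ≤ y) : msort N = x :: msort (N - {x}) := by
  conv_lhs => rw [← Multiset.sub_add_cancel (Multiset.singleton_le.2 hx)]
  exact msort_add_singleton (A := []) rfl (by simp) fun y hy =>
    h y (Multiset.mem_of_le (Multiset.sub_le_self _ _) (mem_msort.1 hy))

end SortedMultisets

section Signature

theorem sigFold_snd_append_eq_zero {i : ℕ} {u v : List ℕ} (hu : (sigFold i u).2 = 0)
    (hv : ∀ x ∈ v, x ≠ i + 1) : (sigFold i (u ++ v)).2 = 0 := by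
  unfold sigFold at *
  rw [List.foldl_append]
  generalize List.foldl _ (0, 0) u = st at hu
  induction v generalizing st with
  | nil => exact hu
  | cons a v ih =>
    refine ih (fun x hx => hv x (List.mem_cons_of_mem a hx)) _ ?_
    have ha := hv a List.mem_cons_self
    dsimp only
    split_ifs <;> simp_all

theorem sigFold_snd_append_succ (i : ℕ) (u : List ℕ) :
    (sigFold i (u ++ [i + 1])).2 = (sigFold i u).2 + 1 := by
  simp [sigFold, List.foldl_append]

theorem fPos_spec {i j : ℕ} {w : List ℕ} (h : fPos i w = some j) :
    w[j]? = some i ∧ (sigFold i (w.take j)).2 = 0 ∧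
      ∀ k, w[k]? = some i → (sigFold i (w.take k)).2 = 0 → k ≤ j := by
  obtain ⟨ks, hks⟩ := List.getLast?_eq_some_iff.1 h
  have hsorted := hks ▸ (List.pairwise_lt_range (n := w.length)).filter _
  have hmem : ∀ k, k ∈ ks ++ [j] ↔ w[k]? = some i ∧ (sigFold i (w.take k)).2 = 0 := by
    intro k
    rw [← hks, List.mem_filter, List.mem_range, decide_eq_true_iff, and_iff_right_iff_imp]
    exact fun hk => (List.getElem?_eq_some_iff.1 hk.1).1
  refine ⟨((hmem j).1 (by simp)).1, ((hmem j).1 (by simp)).2, fun k hk hsig => ?_⟩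
  rcases List.mem_append.1 ((hmem k).2 ⟨hk, hsig⟩) with hk | hk
  · exact ((List.pairwise_append.1 hsorted).2.2 k hk j (by simp)).le
  · exact (List.mem_singleton.1 hk).le

/-- Reading on through `U₁`, which has no `i + 1`, leaves no uncanceled `-` behind, so the
displayed `i` is also a candidate for `fPos`, hence is the chosen one. -/
theorem fPos_eq_of_eq_append {β : Type*} {l U₀ U₁ V : List (ℕ × β)} {i j : ℕ} {b : β}
    (hl : l = U₀ ++ U₁ ++ (i, b) :: V) (hU₀ : (i, b) ∉ U₀) (hU₁ : ∀ z ∈ U₁, z.1 ≠ i + 1)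
    (hV : (i, b) ∉ V) (hj : fPos i (l.map Prod.fst) = some j) (hjb : l[j]? = some (i, b)) :
    j = U₀.length + U₁.length := by
  subst hl
  obtain ⟨-, hjsig, hjmax⟩ := fPos_spec hj
  have hj₀ : U₀.length ≤ j := by
    by_contra! hlt
    rw [List.append_assoc, List.getElem?_append_left hlt] at hjb
    exact hU₀ (List.mem_of_getElem? hjb)
  have hj₁ : j ≤ U₀.length + U₁.length := by
    by_contra! hlt
    rw [List.getElem?_append_right (by simp; omega), List.length_append,
      show j - (U₀.length + U₁.length) = (j - (U₀.length + U₁.length) - 1) + 1 by omega,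
      List.getElem?_cons_succ] at hjb
    exact hV (List.mem_of_getElem? hjb)
  refine le_antisymm hj₁ (hjmax _ ?_ ?_)
  · simp
  · have hdrop : (U₀ ++ U₁).drop j = U₁.drop (j - U₀.length) := by
      rw [List.drop_append, List.drop_eq_nil_of_le hj₀, List.nil_append]
    rw [← List.map_take, List.take_left' (by simp), ← List.take_append_drop j (U₀ ++ U₁), hdrop,
      List.map_append, List.map_take, ← List.take_append_of_le_length (by simpa using hj₁),
      ← List.map_append]
    refine sigFold_snd_append_eq_zero hjsig fun x hx => ?_
    obtain ⟨z, hz, rfl⟩ := List.mem_map.1 hx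
    exact hU₁ z (List.mem_of_mem_drop hz)

end Signature

section Shape

theorem getD_cons_le_of_forall_le {a : ℕ} {l : List ℕ} (hl : ∀ b ∈ l, b ≤ a) (r : ℕ) :
    (a :: l).getD r 0 ≤ a := by
  cases r with
  | zero => simp
  | succ r =>
    rw [List.getD_cons_succ, List.getD_eq_getElem?_getD]
    cases h : l[r]? with
    | none => simp
    | some b => exact hl b (List.mem_of_getElem? h)

theorem lt_colHeight_iff {sh : List ℕ} (hsh : sh.Pairwise (· ≥ ·)) {r c : ℕ} :
    r < colHeight sh c ↔ InShape sh r c := by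
  induction sh generalizing r with
  | nil => simp [colHeight]
  | cons a l ih =>
    rw [List.pairwise_cons] at hsh
    by_cases hca : c < a
    · cases r with
      | zero => simp [colHeight, hca]
      | succ r => simpa [colHeight, hca] using ih hsh.2
    · have hnil : (a :: l).filter (fun p => decide (c < p)) = [] :=
        List.filter_eq_nil_iff.2 fun b hb => by
          have hba : b ≤ a := (List.mem_cons.1 hb).elim le_of_eq (hsh.1 b)
          simp only [decide_eq_true_eq]
          omega
      simp only [colHeight, hnil, List.length_nil, Nat.not_lt_zero, InShape, false_iff, not_lt]
      exact (getD_cons_le_of_forall_le hsh.1 r).trans (not_lt.1 hca)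

theorem IsMVT.inShape_of_mem {n : ℕ} {sh : List ℕ} {T : ℕ → ℕ → Multiset ℕ} (hT : IsMVT n sh T)
    {r c x : ℕ} (hx : x ∈ T r c) : InShape sh r c := by
  by_contra h
  simp [hT.2.1 r c h] at hx

theorem IsMVT.lt_of_lt_row {n : ℕ} {sh : List ℕ} (hsh : sh.Pairwise (· ≥ ·))
    {T : ℕ → ℕ → Multiset ℕ} (hT : IsMVT n sh T) {r r' c x y : ℕ} (hr : r' < r)
    (hx : x ∈ T r' c) (hy : y ∈ T r c) : x < y := by
  induction r generalizing y with
  | zero => omega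
  | succ r ih =>
    have hsucc := hT.inShape_of_mem hy
    rcases (Nat.lt_succ_iff.1 hr).eq_or_lt with rfl | hlt
    · exact hT.2.2.2.2 r' c hsucc x hx y hy
    · have hshape : InShape sh r c :=
        (lt_colHeight_iff hsh).1 (Nat.lt_of_succ_lt ((lt_colHeight_iff hsh).2 hsucc))
      obtain ⟨z, hz⟩ := Multiset.exists_mem_of_ne_zero (hT.1 r c hshape)
      exact (ih hlt hz).trans (hT.2.2.2.2 r c hsucc z hz y hy)

end Shape

section TaggedWord

variable (sh : List ℕ) (T : ℕ → ℕ → Multiset ℕ)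

def boxPairs (r c : ℕ) : List (ℕ × ℕ × ℕ) := (msort (T r c)).map fun x => (x, (r, c))

def colPairs (c : ℕ) : List (ℕ × ℕ × ℕ) :=
  ((List.range (colHeight sh c)).reverse.map fun r => (boxPairs T r c).take 1).flatten
    ++ ((List.range (colHeight sh c)).map fun r => (boxPairs T r c).drop 1).flatten

def mvtPairs : List (ℕ × ℕ × ℕ) := ((List.range (sh.headD 0)).map (colPairs sh T)).flatten

def pairsBefore (r c : ℕ) : List (ℕ × ℕ × ℕ) :=
  ((List.range c).map (colPairs sh T)).flatten
    ++ ((List.range' (r + 1) (colHeight sh c - (r + 1))).reverse.map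
      fun r' => (boxPairs T r' c).take 1).flatten

def pairsBetween (r c : ℕ) : List (ℕ × ℕ × ℕ) :=
  ((List.range r).reverse.map fun r' => (boxPairs T r' c).take 1).flatten
    ++ ((List.range r).map fun r' => (boxPairs T r' c).drop 1).flatten

def pairsAfter (r c : ℕ) : List (ℕ × ℕ × ℕ) :=
  ((List.range' (r + 1) (colHeight sh c - (r + 1))).map fun r' => (boxPairs T r' c).drop 1).flatten
    ++ ((List.range' (c + 1) (sh.headD 0 - (c + 1))).map (colPairs sh T)).flatten

theorem map_fst_boxPairs (r c : ℕ) :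
    (boxPairs T r c).map Prod.fst = msort (T r c) := by
  simp [boxPairs, Function.comp_def]

theorem map_fst_colPairs (c : ℕ) : (colPairs sh T c).map Prod.fst = colWord sh T c := by
  simp [colPairs, colWord, boxPairs, List.map_flatten, Function.comp_def, List.map_take]

theorem map_fst_mvtPairs : (mvtPairs sh T).map Prod.fst = mvtWord sh T := by
  simp [mvtPairs, mvtWord, List.map_flatten, Function.comp_def, map_fst_colPairs]

theorem map_snd_colPairs (c : ℕ) : (colPairs sh T c).map Prod.snd = colBoxes sh T c := by
  simp [colPairs, colBoxes, boxPairs, List.map_flatten, Function.comp_def, List.map_take]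

theorem map_snd_mvtPairs : (mvtPairs sh T).map Prod.snd = mvtBoxes sh T := by
  simp [mvtPairs, mvtBoxes, List.map_flatten, Function.comp_def, map_snd_colPairs]

theorem mvtPairs_eq_around {r c : ℕ} (hc : c < sh.headD 0) (hr : r < colHeight sh c) :
    mvtPairs sh T = pairsBefore sh T r c ++ (boxPairs T r c).take 1 ++ pairsBetween T r c
      ++ (boxPairs T r c).drop 1 ++ pairsAfter sh T r c := by
  rw [mvtPairs, range_eq_append_cons hc]
  simp only [List.map_append, List.map_cons, List.flatten_append, List.flatten_cons]
  rw [colPairs, range_eq_append_cons hr]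
  simp [pairsBefore, pairsBetween, pairsAfter, List.reverse_append]

variable {sh T}

theorem getElem?_mvtPairs {j x : ℕ} (h : (mvtWord sh T)[j]? = some x) :
    (mvtPairs sh T)[j]? = some (x, (mvtBoxes sh T).getD j (0, 0)) := by
  rw [← map_fst_mvtPairs, List.getElem?_map] at h
  rw [← map_snd_mvtPairs, List.getD_eq_getElem?_getD, List.getElem?_map]
  obtain ⟨p, hp, rfl⟩ := Option.map_eq_some_iff.1 h
  simp [hp]

theorem pairsBefore_eq_succ {r c : ℕ} (hr : r + 1 < colHeight sh c) :
    pairsBefore sh T r c = pairsBefore sh T (r + 1) c ++ (boxPairs T (r + 1) c).take 1 := by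
  rw [pairsBefore, pairsBefore,
    show colHeight sh c - (r + 1) = colHeight sh c - (r + 1 + 1) + 1 by omega, List.range'_succ]
  simp

theorem pairsAfter_eq_succ {r c : ℕ} (hr : r + 1 < colHeight sh c) :
    pairsAfter sh T r c = (boxPairs T (r + 1) c).drop 1 ++ pairsAfter sh T (r + 1) c := by
  rw [pairsAfter, pairsAfter,
    show colHeight sh c - (r + 1) = colHeight sh c - (r + 1 + 1) + 1 by omega, List.range'_succ]
  simp

theorem mem_boxPairs {r c : ℕ} {z : ℕ × ℕ × ℕ} (hz : z ∈ boxPairs T r c) :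
    z.2 = (r, c) ∧ z.1 ∈ T r c := by
  obtain ⟨x, hx, rfl⟩ := List.mem_map.1 hz
  exact ⟨rfl, mem_msort.1 hx⟩

theorem mem_boxPairs_of_mem_take {r c : ℕ} {z : ℕ × ℕ × ℕ} (hz : z ∈ (boxPairs T r c).take 1) :
    z.2 = (r, c) ∧ z.1 ∈ T r c :=
  mem_boxPairs (List.mem_of_mem_take hz)

theorem mem_boxPairs_of_mem_drop {r c : ℕ} {z : ℕ × ℕ × ℕ} (hz : z ∈ (boxPairs T r c).drop 1) :
    z.2 = (r, c) ∧ z.1 ∈ T r c :=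
  mem_boxPairs (List.mem_of_mem_drop hz)

theorem mem_colPairs {c : ℕ} {z : ℕ × ℕ × ℕ} (hz : z ∈ colPairs sh T c) :
    z.2.2 = c ∧ z.2.1 < colHeight sh c ∧ z.1 ∈ T z.2.1 c := by
  simp only [colPairs, List.mem_append, List.mem_flatten, List.mem_map, List.mem_reverse,
    List.mem_range] at hz
  rcases hz with ⟨_, ⟨r, hr, rfl⟩, hz⟩ | ⟨_, ⟨r, hr, rfl⟩, hz⟩
  · obtain ⟨h, hz⟩ := mem_boxPairs_of_mem_take hz
    rw [h]
    exact ⟨rfl, hr, hz⟩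
  · obtain ⟨h, hz⟩ := mem_boxPairs_of_mem_drop hz
    rw [h]
    exact ⟨rfl, hr, hz⟩

theorem mem_mvtPairs {z : ℕ × ℕ × ℕ} (hz : z ∈ mvtPairs sh T) :
    z.2.2 < sh.headD 0 ∧ z.2.1 < colHeight sh z.2.2 ∧ z.1 ∈ T z.2.1 z.2.2 := by
  simp only [mvtPairs, List.mem_flatten, List.mem_map, List.mem_range] at hz
  obtain ⟨_, ⟨c, hc, rfl⟩, hz⟩ := hz
  obtain ⟨rfl, hz⟩ := mem_colPairs hz
  exact ⟨hc, hz⟩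

theorem snd_ne_of_mem_pairsBefore {r c : ℕ} {z : ℕ × ℕ × ℕ} (hz : z ∈ pairsBefore sh T r c) :
    z.2 ≠ (r, c) := by
  simp only [pairsBefore, List.mem_append, List.mem_flatten, List.mem_map, List.mem_reverse,
    List.mem_range, List.mem_range'_1] at hz
  rcases hz with ⟨_, ⟨c', hc', rfl⟩, hz⟩ | ⟨_, ⟨r', hr', rfl⟩, hz⟩
  · have := (mem_colPairs hz).1
    grind
  · rw [(mem_boxPairs_of_mem_take hz).1]
    grind

theorem mem_pairsBetween {r c : ℕ} {z : ℕ × ℕ × ℕ} (hz : z ∈ pairsBetween T r c) :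
    z.2.2 = c ∧ z.2.1 < r ∧ z.1 ∈ T z.2.1 c := by
  simp only [pairsBetween, List.mem_append, List.mem_flatten, List.mem_map, List.mem_reverse,
    List.mem_range] at hz
  rcases hz with ⟨_, ⟨r', hr', rfl⟩, hz⟩ | ⟨_, ⟨r', hr', rfl⟩, hz⟩
  · obtain ⟨h, hz⟩ := mem_boxPairs_of_mem_take hz
    rw [h]
    exact ⟨rfl, hr', hz⟩
  · obtain ⟨h, hz⟩ := mem_boxPairs_of_mem_drop hz
    rw [h]
    exact ⟨rfl, hr', hz⟩

theorem snd_ne_of_mem_pairsAfter {r c : ℕ} {z : ℕ × ℕ × ℕ} (hz : z ∈ pairsAfter sh T r c) :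
    z.2 ≠ (r, c) := by
  simp only [pairsAfter, List.mem_append, List.mem_flatten, List.mem_map, List.mem_range'_1] at hz
  rcases hz with ⟨_, ⟨r', hr', rfl⟩, hz⟩ | ⟨_, ⟨c', hc', rfl⟩, hz⟩
  · rw [(mem_boxPairs_of_mem_drop hz).1]
    grind
  · have := (mem_colPairs hz).1
    grind

end TaggedWord

section Congr

variable {sh : List ℕ} {S T : ℕ → ℕ → Multiset ℕ} {r c : ℕ}

theorem boxPairs_congr (h : S r c = T r c) : boxPairs S r c = boxPairs T r c := by
  rw [boxPairs, boxPairs, h]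

theorem colPairs_congr (h : ∀ r', S r' c = T r' c) : colPairs sh S c = colPairs sh T c := by
  simp only [colPairs, boxPairs_congr (h _)]

theorem pairsBefore_congr (h : ∀ r' c', c' < c ∨ c' = c ∧ r < r' → S r' c' = T r' c') :
    pairsBefore sh S r c = pairsBefore sh T r c := by
  unfold pairsBefore
  congr 2
  · exact List.map_congr_left fun c' hc' =>
      colPairs_congr fun r' => h r' c' (.inl (List.mem_range.1 hc'))
  · refine List.map_congr_left fun r' hr' => ?_
    rw [List.mem_reverse, List.mem_range'_1] at hr'
    rw [boxPairs_congr (h r' c (.inr ⟨rfl, by omega⟩))]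

theorem pairsBetween_congr (h : ∀ r' < r, S r' c = T r' c) :
    pairsBetween S r c = pairsBetween T r c := by
  unfold pairsBetween
  congr 2
  · refine List.map_congr_left fun r' hr' => ?_
    rw [boxPairs_congr (h r' (List.mem_range.1 (List.mem_reverse.1 hr')))]
  · refine List.map_congr_left fun r' hr' => ?_
    rw [boxPairs_congr (h r' (List.mem_range.1 hr'))]

theorem pairsAfter_congr (h : ∀ r' c', c < c' ∨ c' = c ∧ r < r' → S r' c' = T r' c') :
    pairsAfter sh S r c = pairsAfter sh T r c := by
  unfold pairsAfter
  congr 2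
  · refine List.map_congr_left fun r' hr' => ?_
    rw [List.mem_range'_1] at hr'
    rw [boxPairs_congr (h r' c (.inr ⟨rfl, by omega⟩))]
  · refine List.map_congr_left fun c' hc' => colPairs_congr fun r' => h r' c' (.inl ?_)
    rw [List.mem_range'_1] at hc'
    omega

end Congr

def replaceEntry (T : ℕ → ℕ → Multiset ℕ) (r c x y : ℕ) : ℕ → ℕ → Multiset ℕ :=
  fun r' c' => if r' = r ∧ c' = c then T r c - {x} + {y} else T r' c'

def moveEntryDown (T : ℕ → ℕ → Multiset ℕ) (r c x y : ℕ) : ℕ → ℕ → Multiset ℕ :=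
  fun r' c' =>
    if r' = r ∧ c' = c then T r c - {x}
    else if r' = r + 1 ∧ c' = c then T (r + 1) c + {y}
    else T r' c'

theorem mvtF_eq (sh : List ℕ) (i : ℕ) (T : ℕ → ℕ → Multiset ℕ) :
    mvtF sh i T = (fPos i (mvtWord sh T)).map fun j =>
      let b := (mvtBoxes sh T).getD j (0, 0)
      if i + 1 ∈ T (b.1 + 1) b.2 then moveEntryDown T b.1 b.2 i (i + 1)
      else replaceEntry T b.1 b.2 i (i + 1) :=
  rfl

section Raising

variable {n : ℕ} {sh : List ℕ} {T : ℕ → ℕ → Multiset ℕ} {r c : ℕ}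

/-- The displayed `x` is the last copy of `x` in box `(r, c)` in reading order; the letters read
between an earlier copy and it come from that box or from the boxes above it, so they are at
most `x` by column strictness. -/
theorem exists_mvtPairs_replaceEntry (hsh : sh.Pairwise (· ≥ ·)) (hT : IsMVT n sh T) {x : ℕ}
    (hc : c < sh.headD 0) (hr : r < colHeight sh c) (hx : x ∈ T r c) :
    ∃ U₀ U₁ V, mvtPairs sh T = U₀ ++ U₁ ++ (x, (r, c)) :: V ∧
      mvtPairs sh (replaceEntry T r c x (x + 1)) = U₀ ++ U₁ ++ (x + 1, (r, c)) :: V ∧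
      (x, (r, c)) ∉ U₀ ∧ (∀ z ∈ U₁, z.1 ≤ x) ∧ (x, (r, c)) ∉ V := by
  set T' := replaceEntry T r c x (x + 1)
  obtain ⟨A, B, hs, hB⟩ := exists_eq_append_cons_of_pairwise (msort_pairwise _) (mem_msort.2 hx)
  have hA : ∀ a ∈ A, a ≤ x := fun a ha =>
    (List.pairwise_append.1 (hs ▸ msort_pairwise (T r c))).2.2 a ha x List.mem_cons_self
  have hs' : msort (T' r c) = A ++ (x + 1) :: B := by
    simp only [T', replaceEntry, and_self, if_true]
    exact msort_add_singleton (msort_sub_singleton hs) (fun a ha => (hA a ha).trans x.le_succ) hB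
  have hoff : ∀ r' c', ¬(r' = r ∧ c' = c) → T' r' c' = T r' c' := fun r' c' h => if_neg h
  let tag (l : List ℕ) := l.map fun a => (a, (r, c))
  obtain ⟨X, Y, hXY, hX, hY⟩ := exists_take_one_append_drop_one (tag A) (tag B)
    (pairsBetween T r c) (x, (r, c)) (x + 1, (r, c))
  refine ⟨pairsBefore sh T r c, X, Y ++ pairsAfter sh T r c, ?_, ?_,
    fun h => snd_ne_of_mem_pairsBefore h rfl, fun z hz => ?_, fun h => ?_⟩
  · rw [mvtPairs_eq_around sh T hc hr, ← (hXY _ _).1, boxPairs, hs]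
    simp [tag]
  · rw [mvtPairs_eq_around sh T' hc hr, ← (hXY _ _).2, boxPairs, hs',
      pairsBefore_congr fun r' c' h => hoff r' c' (by omega),
      pairsBetween_congr fun r' h => hoff r' c (by omega),
      pairsAfter_congr fun r' c' h => hoff r' c' (by omega)]
    simp [tag]
  · rcases hX z hz with hz | hz
    · obtain ⟨a, ha, rfl⟩ := List.mem_map.1 hz
      exact hA a ha
    · obtain ⟨-, hz, hzT⟩ := mem_pairsBetween hz
      exact (hT.lt_of_lt_row hsh hz hzT hx).le
  · rcases List.mem_append.1 h with h | h
    · rcases hY _ h with h | h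
      · exact (mem_pairsBetween h).2.1.false
      · obtain ⟨b, hb, hbx⟩ := List.mem_map.1 h
        exact (hB b hb).ne (congrArg Prod.fst hbx).symm
    · exact snd_ne_of_mem_pairsAfter h rfl

theorem mvtWord_replaceEntry (hsh : sh.Pairwise (· ≥ ·)) (hT : IsMVT n sh T) {i j : ℕ}
    (hj : fPos i (mvtWord sh T) = some j) (hjb : (mvtPairs sh T)[j]? = some (i, (r, c))) :
    mvtWord sh (replaceEntry T r c i (i + 1)) = (mvtWord sh T).set j (i + 1) := by
  obtain ⟨hc, hr, hi⟩ := mem_mvtPairs (List.mem_of_getElem? hjb)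
  obtain ⟨U₀, U₁, V, hpairs, hpairs', hU₀, hU₁, hV⟩ := exists_mvtPairs_replaceEntry hsh hT hc hr hi
  rw [← map_fst_mvtPairs] at hj
  obtain rfl := fPos_eq_of_eq_append hpairs hU₀ (fun z hz => by have := hU₁ z hz; omega) hV hj hjb
  rw [← map_fst_mvtPairs, ← map_fst_mvtPairs, hpairs, hpairs']
  simp [List.set_append_right]

/-- The smallest entry `i + 1` of the box below would be read immediately before this `i`
and cancel it. -/
theorem msort_ne_singleton_of_fPos {i j : ℕ} (hj : fPos i (mvtWord sh T) = some j)
    (hjb : (mvtPairs sh T)[j]? = some (i, (r, c))) (hr : r + 1 < colHeight sh c)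
    (hbelow : (msort (T (r + 1) c)).take 1 = [i + 1]) : msort (T r c) ≠ [i] := by
  intro hs
  have hc : c < sh.headD 0 := (mem_mvtPairs (List.mem_of_getElem? hjb)).1
  have hpairs : mvtPairs sh T =
      pairsBefore sh T r c ++ [] ++ (i, (r, c)) :: (pairsBetween T r c ++ pairsAfter sh T r c) := by
    rw [mvtPairs_eq_around sh T (r := r) hc (by omega), boxPairs, hs]
    simp
  have hbefore : (pairsBefore sh T r c).map Prod.fst =
      (pairsBefore sh T (r + 1) c).map Prod.fst ++ [i + 1] := by
    rw [pairsBefore_eq_succ hr, List.map_append, List.map_take, map_fst_boxPairs, hbelow]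
  rw [← map_fst_mvtPairs] at hj
  have hpos := fPos_eq_of_eq_append hpairs (fun h => snd_ne_of_mem_pairsBefore h rfl) (by simp)
    (fun h => (List.mem_append.1 h).elim (fun h => (mem_pairsBetween h).2.1.false)
      fun h => snd_ne_of_mem_pairsAfter h rfl) hj hjb
  have hsig := (fPos_spec hj).2.1
  rw [hpairs, hpos, ← List.map_take, List.append_nil, List.length_nil, Nat.add_zero,
    List.take_left' rfl, hbefore, sigFold_snd_append_succ] at hsig
  omega

/-- The tails of boxes `(r, c)` and `(r + 1, c)` are read consecutively. -/
theorem mvtWord_eq_of_tails_append_eq {S : ℕ → ℕ → Multiset ℕ} (hc : c < sh.headD 0)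
    (hr : r + 1 < colHeight sh c)
    (hoff : ∀ r' c', ¬(c' = c ∧ (r' = r ∨ r' = r + 1)) → S r' c' = T r' c')
    (htop : (msort (S r c)).take 1 = (msort (T r c)).take 1)
    (hbot : (msort (S (r + 1) c)).take 1 = (msort (T (r + 1) c)).take 1)
    (htails : (msort (S r c)).drop 1 ++ (msort (S (r + 1) c)).drop 1 =
      (msort (T r c)).drop 1 ++ (msort (T (r + 1) c)).drop 1) :
    mvtWord sh S = mvtWord sh T := by
  rw [← map_fst_mvtPairs, ← map_fst_mvtPairs, mvtPairs_eq_around sh S (r := r) hc (by omega),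
    mvtPairs_eq_around sh T (r := r) hc (by omega), pairsBefore_eq_succ hr, pairsBefore_eq_succ hr,
    pairsAfter_eq_succ hr, pairsAfter_eq_succ hr,
    pairsBefore_congr fun r' c' h => hoff r' c' (by omega),
    pairsBetween_congr fun r' h => hoff r' c (by omega),
    pairsAfter_congr fun r' c' h => hoff r' c' (by omega)]
  simp only [List.map_append, List.map_take, List.map_drop, map_fst_boxPairs, htop, hbot,
    List.append_assoc]
  rw [← List.append_assoc (List.drop 1 _), htails, List.append_assoc]

/-- Column strictness against the `i + 1` below makes `i` the largest entry of its box. -/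
theorem exists_msort_eq_of_fPos (hsh : sh.Pairwise (· ≥ ·)) (hT : IsMVT n sh T) {i j : ℕ}
    (hj : fPos i (mvtWord sh T) = some j) (hjb : (mvtPairs sh T)[j]? = some (i, (r, c)))
    (hbelow : i + 1 ∈ T (r + 1) c) : ∃ a A, msort (T r c) = a :: A ++ [i] := by
  have hi : i ∈ T r c := (mem_mvtPairs (List.mem_of_getElem? hjb)).2.2
  have hshape := hT.inShape_of_mem hbelow
  have hcol : ∀ x ∈ T r c, ∀ y ∈ T (r + 1) c, x < y := hT.2.2.2.2 r c hshape
  obtain ⟨A, B, hs, hB⟩ := exists_eq_append_cons_of_pairwise (msort_pairwise _) (mem_msort.2 hi)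
  obtain rfl : B = [] := List.eq_nil_iff_forall_not_mem.2 fun b hb => by
    have := hcol b (mem_msort.1 (by simp [hs, hb])) _ hbelow
    have := hB b hb
    omega
  have hbelow₁ : (msort (T (r + 1) c)).take 1 = [i + 1] := by
    rw [msort_eq_cons_of_forall_le hbelow fun y hy => hcol i hi y hy]
    rfl
  obtain ⟨a, A, rfl⟩ : ∃ a A', A = a :: A' := List.exists_cons_of_ne_nil fun h =>
    msort_ne_singleton_of_fPos hj hjb ((lt_colHeight_iff hsh).2 hshape) hbelow₁
      (by simpa [h] using hs)
  exact ⟨a, A, hs⟩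

theorem mvtWord_moveEntryDown (hsh : sh.Pairwise (· ≥ ·)) (hT : IsMVT n sh T) {i j : ℕ}
    (hj : fPos i (mvtWord sh T) = some j) (hjb : (mvtPairs sh T)[j]? = some (i, (r, c)))
    (hbelow : i + 1 ∈ T (r + 1) c) :
    mvtWord sh (moveEntryDown T r c i (i + 1)) = mvtWord sh (replaceEntry T r c i (i + 1)) := by
  obtain ⟨hc, -, hi⟩ : c < sh.headD 0 ∧ r < colHeight sh c ∧ i ∈ T r c :=
    mem_mvtPairs (List.mem_of_getElem? hjb)
  have hshape := hT.inShape_of_mem hbelow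
  have hcol : ∀ y ∈ T (r + 1) c, i + 1 ≤ y := hT.2.2.2.2 r c hshape i hi
  obtain ⟨a, A, hs⟩ := exists_msort_eq_of_fPos hsh hT hj hjb hbelow
  have hs₁ := msort_eq_cons_of_forall_le hbelow hcol
  set tl := msort (T (r + 1) c - {i + 1})
  have hmove : msort (moveEntryDown T r c i (i + 1) r c) = a :: A := by
    rw [show moveEntryDown T r c i (i + 1) r c = T r c - {i} by simp [moveEntryDown]]
    simpa using msort_sub_singleton hs
  have hmove₁ : msort (moveEntryDown T r c i (i + 1) (r + 1) c) = (i + 1) :: (i + 1) :: tl := by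
    rw [show moveEntryDown T r c i (i + 1) (r + 1) c = T (r + 1) c + {i + 1} by
      simp [moveEntryDown]]
    exact msort_add_singleton (A := [i + 1]) hs₁ (by simp) fun y hy =>
      hcol y (Multiset.mem_of_le (Multiset.sub_le_self _ _) (mem_msort.1 hy))
  have hrepl : msort (replaceEntry T r c i (i + 1) r c) = a :: A ++ [i + 1] := by
    rw [show replaceEntry T r c i (i + 1) r c = T r c - {i} + {i + 1} by simp [replaceEntry]]
    refine msort_add_singleton (msort_sub_singleton hs) (fun x hx => ?_) (by simp)
    exact (hT.2.2.2.2 r c hshape x (mem_msort.1 (by rw [hs]; exact List.mem_append_left _ hx)) _ hbelow).le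
  have hrepl₁ : msort (replaceEntry T r c i (i + 1) (r + 1) c) = (i + 1) :: tl := by
    rwa [show replaceEntry T r c i (i + 1) (r + 1) c = T (r + 1) c by simp [replaceEntry]]
  refine mvtWord_eq_of_tails_append_eq hc ((lt_colHeight_iff hsh).2 hshape)
    (fun r' c' h => ?_) ?_ ?_ ?_
  · have h₁ : ¬(r' = r ∧ c' = c) := by omega
    have h₂ : ¬(r' = r + 1 ∧ c' = c) := by omega
    simp only [moveEntryDown, replaceEntry, if_neg h₁, if_neg h₂]
  all_goals simp [hmove, hmove₁, hrepl, hrepl₁]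

end Raising

theorem mvt_reading_word_commutes_with_f_general
    (n : ℕ) (lam : List ℕ) (hlam : IsPartition lam)
    (T : ℕ → ℕ → Multiset ℕ) (hT : IsMVT n lam T)
    (i : ℕ)
    (T' : ℕ → ℕ → Multiset ℕ) (hf : mvtF lam i T = some T') :
    some (mvtWord lam T') = fWord i (mvtWord lam T) := by
  rw [mvtF_eq] at hf
  obtain ⟨j, hj, rfl⟩ := Option.map_eq_some_iff.1 hf
  rw [fWord, hj, Option.map_some]
  have hjb := getElem?_mvtPairs (fPos_spec hj).1
  generalize (mvtBoxes lam T).getD j (0, 0) = b at hjb ⊢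
  obtain ⟨r, c⟩ := b
  rw [← mvtWord_replaceEntry hlam.1 hT hj hjb]
  dsimp only
  split_ifs with hbelow
  · rw [mvtWord_moveEntryDown hlam.1 hT hj hjb hbelow]
  · rfl

/-- If `T` is a multiset-valued tableau of shape `λ` with entries at most
`n` and `f_i T ≠ 0`, then the reading word of `f_i T` is `f_i` applied to the reading word
of `T`: the changed letter does not move in the reading word. -/
theorem mvt_reading_word_commutes_with_f
    (n : ℕ) (lam : List ℕ) (hlam : IsPartition lam)
    (T : ℕ → ℕ → Multiset ℕ) (hT : IsMVT n lam T)
    (i : ℕ) (hi : 1 ≤ i)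
    (T' : ℕ → ℕ → Multiset ℕ) (hf : mvtF lam i T = some T') :
    some (mvtWord lam T') = fWord i (mvtWord lam T) :=
  mvt_reading_word_commutes_with_f_general n lam hlam T hT i T' hf
end

section
/- Let MVT^n_a(1^k) be the set of multiset-valued tableaux of single-column shape with k boxes, entries at most n, and total excess a (total number of entries minus k equals a). Then the map sending such a column with box contents m_j together with extra entries o_1 ≤ ... ≤ o_a (listed row by row) to the hook-shaped semistandard tableau with first row (m_1, o_1, ..., o_a) and first column (m_1, m_2, ..., m_k) is a bijection onto the set of semistandard Young tableaux of hook shape (a+1, 1^{k-1}) with entries at most n, and this bijection preserves reading words. -/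
/-- Minimum entry of the box in row `r` of a single-column tableau. -/
def minEntry (T : ℕ → ℕ → Multiset ℕ) (r : ℕ) : ℕ := (msort (T r 0)).headD 0

/-- The extra (non-minimal) entries of a single-column multiset-valued tableau with `k`
boxes, listed increasingly. -/
def extras (T : ℕ → ℕ → Multiset ℕ) (k : ℕ) : List ℕ :=
  Multiset.sort
    (((List.range k).map (fun r => (msort (T r 0)).drop 1)).flatten : Multiset ℕ) (· ≤ ·)

/-- Total number of entries of a single-column multiset-valued tableau with `k` boxes. -/
def colEntries (T : ℕ → ℕ → Multiset ℕ) (k : ℕ) : ℕ :=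
  ∑ r ∈ Finset.range k, Multiset.card (T r 0)

/-- The hook shape `(a+1, 1^{k-1})`. -/
def hookShape (k a : ℕ) : List ℕ := (a + 1) :: List.replicate (k - 1) 1

/-- The map of Proposition `columns → hooks`: first row `(m_1, o_1, …, o_a)`,
first column `(m_1, …, m_k)`. -/
def psi (k : ℕ) (T : ℕ → ℕ → Multiset ℕ) : ℕ → ℕ → Multiset ℕ := fun r c =>
  if r = 0 then
    (if c = 0 then {minEntry T 0}
     else if c < colEntries T k - k + 1 then {(extras T k).getD (c - 1) 0} else 0)
  else if c = 0 ∧ r < k then {minEntry T r} else 0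

/-! A column is determined by its box minima `m 0 < ⋯ < m (k-1)` together with the multiset `E` of
its extra entries, all at least `m 0`: by column strictness an extra entry `x` lies in the last box
whose minimum is at most `x`, and conversely any such data fill a column. A hook tableau with
singleton boxes is determined by the same data, read off its first column and the rest of its first
row, and `psi` is exactly this correspondence. Both reading words are the minima from the bottom up
followed by `E` sorted increasingly. -/

def mhead (M : Multiset ℕ) : ℕ := (msort M).headD 0

section Mhead

variable {M : Multiset ℕ} {x : ℕ}

lemma msort_eq_mhead_cons (h : M ≠ 0) : msort M = mhead M :: (msort M).drop 1 := by
  rcases hl : msort M with _ | ⟨y, t⟩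
  · exact absurd (by rw [← Multiset.sort_eq M (· ≤ ·), ← msort, hl]; rfl) h
  · simp [mhead, hl]

lemma mhead_cons_msort_drop (h : M ≠ 0) : mhead M ::ₘ ((msort M).drop 1 : Multiset ℕ) = M := by
  rw [Multiset.cons_coe, ← msort_eq_mhead_cons h, msort, Multiset.sort_eq]

lemma msort_take_one (h : M ≠ 0) : (msort M).take 1 = [mhead M] := by
  rw [msort_eq_mhead_cons h]; rfl

lemma mhead_mem (h : M ≠ 0) : mhead M ∈ M := by
  have := Multiset.mem_cons_self (mhead M) ((msort M).drop 1 : Multiset ℕ)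
  rwa [mhead_cons_msort_drop h] at this

lemma mhead_le (hx : x ∈ M) : mhead M ≤ x := by
  have hM : M ≠ 0 := by rintro rfl; simp at hx
  have hsorted := Multiset.pairwise_sort M (· ≤ ·)
  rw [← msort, msort_eq_mhead_cons hM, List.pairwise_cons] at hsorted
  rw [← Multiset.mem_sort (· ≤ ·), ← msort, msort_eq_mhead_cons hM, List.mem_cons] at hx
  rcases hx with rfl | hx
  exacts [le_rfl, hsorted.1 x hx]

lemma mhead_eq (hx : x ∈ M) (hle : ∀ y ∈ M, x ≤ y) : mhead M = x :=
  le_antisymm (mhead_le hx) (hle _ (mhead_mem (by rintro rfl; simp at hx)))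

lemma mhead_singleton (x : ℕ) : mhead {x} = x :=
  mhead_eq (Multiset.mem_singleton_self x) fun _ hy => (Multiset.mem_singleton.mp hy).ge

lemma eq_singleton_mhead (h : Multiset.card M = 1) : M = {mhead M} := by
  obtain ⟨y, rfl⟩ := Multiset.card_eq_one.mp h
  rw [mhead_singleton]

end Mhead

lemma Multiset.filter_finset_sum {ι α : Type*} (s : Finset ι) (f : ι → Multiset α)
    (p : α → Prop) [DecidablePred p] : (∑ i ∈ s, f i).filter p = ∑ i ∈ s, (f i).filter p :=
  map_sum (⟨⟨Multiset.filter p, Multiset.filter_zero p⟩, Multiset.filter_add p⟩ :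
    Multiset α →+ Multiset α) f s

lemma Multiset.filter_fiber_of_forall {α : Type*} {M : Multiset α} {g : α → ℕ} {i : ℕ}
    (h : ∀ x ∈ M, g x = i) (j : ℕ) : M.filter (fun x => g x = j) = if j = i then M else 0 := by
  split_ifs with hj
  · exact Multiset.filter_eq_self.mpr fun x hx => (h x hx).trans hj.symm
  · exact Multiset.filter_eq_nil.mpr fun x hx hx' => hj (hx'.symm.trans (h x hx))

lemma Multiset.sum_range_filter_fiber {α : Type*} [DecidableEq α] (E : Multiset α) (g : α → ℕ)
    {k : ℕ} (hg : ∀ x ∈ E, g x < k) : ∑ r ∈ Finset.range k, E.filter (fun x => g x = r) = E := by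
  ext x
  rw [Multiset.count_sum']
  simp only [Multiset.count_filter]
  by_cases hx : x ∈ E
  · rw [Finset.sum_ite_eq (Finset.range k) (g x), if_pos (Finset.mem_range.mpr (hg x hx))]
  · simp [Multiset.count_eq_zero.mpr hx]

lemma Multiset.coe_flatten_map_range {α : Type*} (f : ℕ → List α) (k : ℕ) :
    (((List.range k).map f).flatten : Multiset α) = ∑ r ∈ Finset.range k, (f r : Multiset α) := by
  induction k with
  | zero => rfl
  | succ k ih => rw [List.range_succ, List.map_append, List.flatten_append, ← Multiset.coe_add, ih,
      Finset.sum_range_succ]; simp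

section Shapes

variable {k a r c : ℕ}

lemma inShape_replicate_one : InShape (List.replicate k 1) r c ↔ c = 0 ∧ r < k := by
  simp only [InShape, List.getD_eq_getElem?_getD, List.getElem?_replicate]
  split_ifs <;> simp <;> omega

lemma inShape_hookShape (hk : 0 < k) :
    InShape (hookShape k a) r c ↔ (c = 0 ∧ r < k) ∨ (r = 0 ∧ 0 < c ∧ c ≤ a) := by
  rcases r with _ | r
  · simp only [InShape, hookShape, List.getD_cons_zero, true_and]
    omega
  · rw [InShape, hookShape, List.getD_cons_succ]
    exact inShape_replicate_one.trans (by omega)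

lemma colHeight_replicate_one : colHeight (List.replicate k 1) 0 = k := by
  simp [colHeight]

lemma colHeight_hookShape_zero (hk : 0 < k) : colHeight (hookShape k a) 0 = k := by
  simp [colHeight, hookShape]; omega

lemma colHeight_hookShape_succ (hc : c < a) : colHeight (hookShape k a) (c + 1) = 1 := by
  simp [colHeight, hookShape, hc]

end Shapes

/-- The box `boxOf k m x` of a column with box minima `m 0 < ⋯ < m (k-1)` that receives `x`. -/
def boxOf (k : ℕ) (m : ℕ → ℕ) (x : ℕ) : ℕ := Nat.findGreatest (fun r => m r ≤ x) (k - 1)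

def mkColumn (k : ℕ) (m : ℕ → ℕ) (E : Multiset ℕ) : ℕ → ℕ → Multiset ℕ := fun r c =>
  if c = 0 ∧ r < k then m r ::ₘ E.filter (fun x => boxOf k m x = r) else 0

section BoxOf

variable {k r x : ℕ} {m : ℕ → ℕ}

lemma boxOf_lt (hk : 0 < k) : boxOf k m x < k := by
  have := Nat.findGreatest_le (P := fun r => m r ≤ x) (k - 1)
  rw [boxOf]; omega

lemma apply_boxOf_le (h0 : m 0 ≤ x) : m (boxOf k m x) ≤ x :=
  Nat.findGreatest_spec (P := fun r => m r ≤ x) (Nat.zero_le _) h0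

lemma lt_apply_of_boxOf_lt (h : boxOf k m x < r) (hr : r < k) : x < m r :=
  not_le.mp (Nat.findGreatest_is_greatest (P := fun r => m r ≤ x) h (by omega))

lemma boxOf_eq (hr : r < k) (hle : m r ≤ x) (hlt : ∀ r', r < r' → r' < k → x < m r') :
    boxOf k m x = r :=
  Nat.findGreatest_eq_iff.mpr ⟨by omega, fun _ => hle, fun r' h1 h2 => by
    have := hlt r' h1 (by omega); omega⟩

end BoxOf

section MkColumn

variable {n k r x : ℕ} {m : ℕ → ℕ} {E : Multiset ℕ}

lemma mkColumn_zero (hr : r < k) :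
    mkColumn k m E r 0 = m r ::ₘ E.filter (fun x => boxOf k m x = r) := by
  simp [mkColumn, hr]

lemma mkColumn_ne_zero (hr : r < k) : mkColumn k m E r 0 ≠ 0 := by
  simp [mkColumn_zero hr]

lemma le_of_mem_mkColumn (hE : ∀ x ∈ E, m 0 ≤ x) (hr : r < k) (hx : x ∈ mkColumn k m E r 0) :
    m r ≤ x := by
  rw [mkColumn_zero hr, Multiset.mem_cons, Multiset.mem_filter] at hx
  rcases hx with rfl | ⟨hx, rfl⟩
  exacts [le_rfl, apply_boxOf_le (hE x hx)]

lemma lt_of_mem_mkColumn (hm : StrictMonoOn m (Set.Iio k)) (hr : r + 1 < k)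
    (hx : x ∈ mkColumn k m E r 0) : x < m (r + 1) := by
  rw [mkColumn_zero (by omega), Multiset.mem_cons, Multiset.mem_filter] at hx
  rcases hx with rfl | ⟨_, hbox⟩
  · exact hm (show r < k by omega) hr (Nat.lt_succ_self r)
  · exact lt_apply_of_boxOf_lt (by omega) hr

lemma minEntry_mkColumn (hE : ∀ x ∈ E, m 0 ≤ x) (hr : r < k) :
    minEntry (mkColumn k m E) r = m r :=
  mhead_eq (by simp [mkColumn_zero hr]) fun _ hy => le_of_mem_mkColumn hE hr hy

lemma mkColumn_isMVT (hm : StrictMonoOn m (Set.Iio k)) (hE : ∀ x ∈ E, m 0 ≤ x)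
    (hm_bound : ∀ r < k, 1 ≤ m r ∧ m r ≤ n) (hE_bound : ∀ x ∈ E, x ≤ n) :
    IsMVT n (List.replicate k 1) (mkColumn k m E) := by
  refine ⟨?_, ?_, ?_, ?_, ?_⟩
  · rintro r c h
    obtain ⟨rfl, hr⟩ := inShape_replicate_one.mp h
    exact mkColumn_ne_zero hr
  · rintro r c h
    simp [mkColumn, inShape_replicate_one.not.mp h]
  · intro r c x hx
    by_cases h : c = 0 ∧ r < k
    · obtain ⟨rfl, hr⟩ := h
      have hmin := hm_bound 0 (by omega)
      rw [mkColumn_zero hr, Multiset.mem_cons, Multiset.mem_filter] at hx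
      rcases hx with rfl | ⟨hx, _⟩
      exacts [hm_bound r hr, ⟨hmin.1.trans (hE x hx), hE_bound x hx⟩]
    · simp [mkColumn, h] at hx
  · intro r c h
    exact absurd (inShape_replicate_one.mp h).1 (Nat.succ_ne_zero c)
  · intro r c h x hx y hy
    obtain ⟨rfl, hr⟩ := inShape_replicate_one.mp h
    exact (lt_of_mem_mkColumn hm hr hx).trans_le (le_of_mem_mkColumn hE hr hy)

lemma sum_mkColumn (hk : 0 < k) :
    ∑ r ∈ Finset.range k, mkColumn k m E r 0 = ∑ r ∈ Finset.range k, {m r} + E := by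
  rw [Finset.sum_congr rfl fun r hr => mkColumn_zero (Finset.mem_range.mp hr)]
  simp only [← Multiset.singleton_add, Finset.sum_add_distrib]
  rw [Multiset.sum_range_filter_fiber E _ fun _ _ => boxOf_lt hk]

end MkColumn

lemma colEntries_eq_card_sum (T : ℕ → ℕ → Multiset ℕ) (k : ℕ) :
    colEntries T k = Multiset.card (∑ r ∈ Finset.range k, T r 0) :=
  (Multiset.card_sum _ _).symm

lemma sum_column_eq {k : ℕ} {T : ℕ → ℕ → Multiset ℕ} (hne : ∀ r < k, T r 0 ≠ 0) :
    ∑ r ∈ Finset.range k, T r 0 = ∑ r ∈ Finset.range k, {minEntry T r} + ↑(extras T k) := by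
  rw [extras, Multiset.sort_eq, Multiset.coe_flatten_map_range, ← Finset.sum_add_distrib]
  refine Finset.sum_congr rfl fun r hr => ?_
  rw [Multiset.singleton_add]
  exact (mhead_cons_msort_drop (hne r (Finset.mem_range.mp hr))).symm

lemma colEntries_eq_add_length {k : ℕ} {T : ℕ → ℕ → Multiset ℕ} (hne : ∀ r < k, T r 0 ≠ 0) :
    colEntries T k = k + (extras T k).length := by
  simp [colEntries_eq_card_sum, sum_column_eq hne]

namespace IsMVT

variable {n k r r' x y : ℕ} {T : ℕ → ℕ → Multiset ℕ}

lemma column_ne_zero (hT : IsMVT n (List.replicate k 1) T) (hr : r < k) : T r 0 ≠ 0 :=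
  hT.1 r 0 (inShape_replicate_one.mpr ⟨rfl, hr⟩)

lemma column_lt (hT : IsMVT n (List.replicate k 1) T) (hr : r + 1 < k) (hx : x ∈ T r 0)
    (hy : y ∈ T (r + 1) 0) : x < y :=
  hT.2.2.2.2 r 0 (inShape_replicate_one.mpr ⟨rfl, hr⟩) x hx y hy

lemma minEntry_mem (hT : IsMVT n (List.replicate k 1) T) (hr : r < k) : minEntry T r ∈ T r 0 :=
  mhead_mem (hT.column_ne_zero hr)

lemma minEntry_strictMonoOn (hT : IsMVT n (List.replicate k 1) T) :
    StrictMonoOn (minEntry T) (Set.Iio k) :=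
  strictMonoOn_of_lt_succ Set.ordConnected_Iio fun r _ _ hr => by
    rw [Set.mem_Iio, Order.succ_eq_add_one] at hr
    rw [Order.succ_eq_add_one]
    exact hT.column_lt hr (hT.minEntry_mem (by omega)) (hT.minEntry_mem hr)

lemma lt_minEntry (hT : IsMVT n (List.replicate k 1) T) (hx : x ∈ T r 0) (hrr' : r < r')
    (hr' : r' < k) : x < minEntry T r' :=
  (hT.column_lt (by omega) hx (hT.minEntry_mem (by omega))).trans_le
    (hT.minEntry_strictMonoOn.monotoneOn (by simp; omega) hr' hrr')

lemma boxOf_minEntry (hT : IsMVT n (List.replicate k 1) T) (hr : r < k) (hx : x ∈ T r 0) :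
    boxOf k (minEntry T) x = r :=
  boxOf_eq hr (mhead_le hx) fun _ h1 h2 => hT.lt_minEntry hx h1 h2

lemma eq_mkColumn (hT : IsMVT n (List.replicate k 1) T) :
    T = mkColumn k (minEntry T) (extras T k) := by
  funext r c
  by_cases h : c = 0 ∧ r < k
  · obtain ⟨rfl, hr⟩ := h
    -- filtering both sides of `sum_column_eq` by `boxOf · = r` isolates box `r`
    have hsum := congrArg (Multiset.filter fun x => boxOf k (minEntry T) x = r)
      (sum_column_eq fun _ => hT.column_ne_zero)
    have hbox {r'} (hr' : r' ∈ Finset.range k) : ∀ x ∈ T r' 0, boxOf k (minEntry T) x = r' :=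
      fun _ => hT.boxOf_minEntry (Finset.mem_range.mp hr')
    have hmin {r'} (hr' : r' ∈ Finset.range k) :
        ∀ x ∈ ({minEntry T r'} : Multiset ℕ), boxOf k (minEntry T) x = r' := fun x hx =>
      hbox hr' x (Multiset.mem_singleton.mp hx ▸ hT.minEntry_mem (Finset.mem_range.mp hr'))
    simp only [Multiset.filter_add, Multiset.filter_finset_sum] at hsum
    rw [Finset.sum_congr rfl fun r' hr' => Multiset.filter_fiber_of_forall (hbox hr') r,
      Finset.sum_congr rfl fun r' hr' => Multiset.filter_fiber_of_forall (hmin hr') r,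
      Finset.sum_ite_eq, Finset.sum_ite_eq, if_pos (Finset.mem_range.mpr hr),
      if_pos (Finset.mem_range.mpr hr)] at hsum
    rw [mkColumn_zero hr, hsum, Multiset.singleton_add]
  · rw [hT.2.1 r c (inShape_replicate_one.not.mpr h)]
    simp [mkColumn, h]

lemma extras_eq_flatten (hT : IsMVT n (List.replicate k 1) T) :
    extras T k = ((List.range k).map fun r => (msort (T r 0)).drop 1).flatten := by
  refine (Multiset.coe_eq_coe.mp (Multiset.sort_eq _ _)).eq_of_pairwise'
    (Multiset.pairwise_sort _ _) (List.pairwise_flatten.mpr ⟨?_, ?_⟩)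
  · simp only [List.mem_map]
    rintro _ ⟨r, _, rfl⟩
    exact (Multiset.pairwise_sort _ _).drop
  · rw [List.pairwise_map]
    refine List.pairwise_lt_range.imp_of_mem fun {r r'} _ hr' hrr' x hx y hy => ?_
    have mem (r : ℕ) {x : ℕ} (hx : x ∈ (msort (T r 0)).drop 1) : x ∈ T r 0 :=
      (Multiset.mem_sort _).mp (List.mem_of_mem_drop hx)
    exact ((hT.lt_minEntry (mem r hx) hrr' (List.mem_range.mp hr')).trans_le
      (mhead_le (mem r' hy))).le

lemma extras_length {a : ℕ} (hT : IsMVT n (List.replicate k 1) T)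
    (hE : colEntries T k = k + a) : (extras T k).length = a := by
  have := colEntries_eq_add_length fun _ => hT.column_ne_zero (k := k)
  omega

end IsMVT

section MkColumnExtras

variable {k : ℕ} {m : ℕ → ℕ} {E : Multiset ℕ}

lemma colEntries_mkColumn (hk : 0 < k) : colEntries (mkColumn k m E) k = k + Multiset.card E := by
  simp [colEntries_eq_card_sum, sum_mkColumn hk]

lemma coe_extras_mkColumn (hk : 0 < k) (hE : ∀ x ∈ E, m 0 ≤ x) :
    (extras (mkColumn k m E) k : Multiset ℕ) = E := by
  have h := sum_column_eq (T := mkColumn k m E) fun _ => mkColumn_ne_zero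
  rw [sum_mkColumn hk, Finset.sum_congr rfl fun r hr =>
    congrArg _ (minEntry_mkColumn hE (Finset.mem_range.mp hr))] at h
  exact (add_left_cancel h).symm

end MkColumnExtras

lemma List.flatten_map_singleton {α β : Type*} (l : List α) (f : α → β) :
    (l.map fun x => [f x]).flatten = l.map f :=
  (List.map_eq_flatMap.trans List.flatMap_def).symm

lemma List.map_getD_range_length {α : Type*} (l : List α) (d : α) :
    (List.range l.length).map (l.getD · d) = l :=
  List.ext_getElem (by simp) fun i _ h => by simp [List.getElem?_eq_getElem h]

lemma exists_mem_getD_extras {k c : ℕ} {T : ℕ → ℕ → Multiset ℕ} (hc : c < (extras T k).length) :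
    ∃ r < k, (extras T k).getD c 0 ∈ T r 0 := by
  have hx := List.getElem_mem hc
  simp only [extras, Multiset.mem_sort, Multiset.mem_coe, List.mem_flatten, List.mem_map,
    List.mem_range] at hx
  obtain ⟨_, ⟨r, hr, rfl⟩, hx⟩ := hx
  exact ⟨r, hr, List.getD_eq_getElem _ _ hc ▸ (Multiset.mem_sort _).mp (List.mem_of_mem_drop hx)⟩

section Psi

variable {n k a r c : ℕ} {T : ℕ → ℕ → Multiset ℕ}

lemma psi_column (hr : r < k) : psi k T r 0 = {minEntry T r} := by
  rcases r with _ | r <;> simp [psi, hr]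

lemma psi_row (hE : colEntries T k = k + a) (hc : c < a) :
    psi k T 0 (c + 1) = {(extras T k).getD c 0} := by
  simp [psi, hE, hc]

lemma psi_eq_zero (hk : 0 < k) (hE : colEntries T k = k + a)
    (h : ¬ InShape (hookShape k a) r c) : psi k T r c = 0 := by
  rw [inShape_hookShape hk] at h
  unfold psi
  rw [hE]
  split_ifs <;> first | rfl | omega

lemma card_psi (hk : 0 < k) (hE : colEntries T k = k + a) (h : InShape (hookShape k a) r c) :
    Multiset.card (psi k T r c) = 1 := by
  rcases (inShape_hookShape hk).mp h with ⟨rfl, hr⟩ | ⟨rfl, hc, hca⟩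
  · rw [psi_column hr, Multiset.card_singleton]
  · obtain ⟨c, rfl⟩ := Nat.exists_eq_add_of_lt hc
    rw [zero_add, psi_row hE (by omega), Multiset.card_singleton]

lemma mhead_psi_column (hk : 0 < k) (hT : IsMVT n (List.replicate k 1) T) :
    (fun r => mhead (psi k T r 0)) = minEntry T := by
  funext r
  by_cases hr : r < k
  · rw [psi_column hr, mhead_singleton]
  · have hpsi : psi k T r 0 = 0 := by simp [psi, hr, show r ≠ 0 by omega]
    rw [hpsi, minEntry, hT.2.1 r 0 (inShape_replicate_one.not.mpr (by omega))]
    rfl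

lemma psi_bound (hk : 0 < k) (hT : IsMVT n (List.replicate k 1) T)
    (hE : colEntries T k = k + a) {x : ℕ} (hx : x ∈ psi k T r c) : 1 ≤ x ∧ x ≤ n := by
  by_cases h : InShape (hookShape k a) r c
  · rcases (inShape_hookShape hk).mp h with ⟨rfl, hr⟩ | ⟨rfl, hc, hca⟩
    · rw [psi_column hr, Multiset.mem_singleton] at hx
      exact hT.2.2.1 r 0 x (hx ▸ hT.minEntry_mem hr)
    · obtain ⟨c, rfl⟩ := Nat.exists_eq_add_of_lt hc
      rw [zero_add, psi_row hE (by omega), Multiset.mem_singleton] at hx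
      obtain ⟨r', -, hr'⟩ :=
        exists_mem_getD_extras (k := k) (T := T) (c := c) (by rw [hT.extras_length hE]; omega)
      exact hT.2.2.1 r' 0 x (hx ▸ hr')
  · simp [psi_eq_zero hk hE h] at hx

lemma psi_isMVT (hk : 0 < k) (hT : IsMVT n (List.replicate k 1) T)
    (hE : colEntries T k = k + a) : IsMVT n (hookShape k a) (psi k T) := by
  have hlen := hT.extras_length hE
  refine ⟨fun r c h => ?_, fun r c h => psi_eq_zero hk hE h, fun r c x hx => psi_bound hk hT hE hx,
    fun r c h x hx y hy => ?_, fun r c h x hx y hy => ?_⟩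
  · exact Multiset.card_pos.mp (by rw [card_psi hk hE h]; exact Nat.one_pos)
  · obtain ⟨rfl, -, hca⟩ := ((inShape_hookShape hk).mp h).resolve_left (by omega)
    rw [psi_row hE (by omega), Multiset.mem_singleton] at hy
    subst hy
    rcases c with _ | c
    · rw [psi_column hk, Multiset.mem_singleton] at hx
      obtain ⟨r', hr', hmem⟩ := exists_mem_getD_extras (k := k) (T := T) (c := 0) (by omega)
      exact hx ▸ (hT.minEntry_strictMonoOn.monotoneOn (Set.mem_Iio.mpr hk) hr'
        (Nat.zero_le r')).trans (mhead_le hmem)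
    · rw [psi_row hE (by omega), Multiset.mem_singleton] at hx
      subst hx
      rw [List.getD_eq_getElem _ _ (by omega), List.getD_eq_getElem _ _ (by omega)]
      exact List.pairwise_iff_getElem.mp (Multiset.pairwise_sort _ _) _ _ _ _ (Nat.lt_succ_self c)
  · obtain ⟨rfl, hr⟩ := ((inShape_hookShape hk).mp h).resolve_right (by omega)
    rw [psi_column (by omega), Multiset.mem_singleton] at hx
    rw [psi_column hr, Multiset.mem_singleton] at hy
    exact hx ▸ hy ▸ hT.minEntry_strictMonoOn (Set.mem_Iio.mpr (by omega)) hr (Nat.lt_succ_self r)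

end Psi

section Words

variable {n k a : ℕ} {T : ℕ → ℕ → Multiset ℕ}

lemma mvtWord_column (hk : 0 < k) (hne : ∀ r < k, T r 0 ≠ 0) :
    mvtWord (List.replicate k 1) T = (List.range k).reverse.map (minEntry T) ++
      ((List.range k).map fun r => (msort (T r 0)).drop 1).flatten := by
  obtain ⟨k, rfl⟩ := Nat.exists_eq_add_of_lt hk
  rw [mvtWord, zero_add, List.replicate_succ, List.headD_cons, List.range_one, List.map_singleton,
    List.flatten_singleton, colWord, ← List.replicate_succ, colHeight_replicate_one,
    List.map_congr_left fun r hr => msort_take_one (hne r (by simpa using hr)),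
    List.flatten_map_singleton]
  rfl

lemma mvtWord_psi (hk : 0 < k) (hT : IsMVT n (List.replicate k 1) T)
    (hE : colEntries T k = k + a) :
    mvtWord (hookShape k a) (psi k T) = (List.range k).reverse.map (minEntry T) ++ extras T k := by
  have hsort {r : ℕ} (hr : r ∈ List.range k) : msort (psi k T r 0) = [minEntry T r] := by
    rw [psi_column (List.mem_range.mp hr), msort, Multiset.sort_singleton]
  have hcolumn : colWord (hookShape k a) (psi k T) 0 = (List.range k).reverse.map (minEntry T) := by
    have hmin : (List.range k).reverse.map (fun r => (msort (psi k T r 0)).take 1) =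
        (List.range k).reverse.map fun r => [minEntry T r] :=
      List.map_congr_left fun r hr => by rw [hsort (List.mem_reverse.mp hr)]; rfl
    have hrest : (List.range k).map (fun r => (msort (psi k T r 0)).drop 1) =
        (List.range k).map fun _ => [] :=
      List.map_congr_left fun r hr => by rw [hsort hr]; rfl
    rw [colWord, colHeight_hookShape_zero hk, hmin, hrest, List.flatten_map_singleton]
    simp
  have hrow {c : ℕ} (hc : c ∈ List.range a) :
      colWord (hookShape k a) (psi k T) (c + 1) = [(extras T k).getD c 0] := by
    simp only [colWord, colHeight_hookShape_succ (List.mem_range.mp hc), List.range_one,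
      List.reverse_singleton, List.map_singleton, List.flatten_singleton,
      psi_row hE (List.mem_range.mp hc), msort, Multiset.sort_singleton]
    rfl
  rw [mvtWord, show (hookShape k a).headD 0 = a + 1 from rfl, List.range_succ_eq_map,
    List.map_cons, List.flatten_cons, hcolumn, List.map_map]
  rw [List.map_congr_left (f := colWord (hookShape k a) (psi k T) ∘ Nat.succ)
      (g := fun c => [(extras T k).getD c 0]) fun c hc => hrow hc, List.flatten_map_singleton,
    ← hT.extras_length hE, List.map_getD_range_length]

end Words

namespace IsMVT

variable {n k a r c : ℕ} {S : ℕ → ℕ → Multiset ℕ}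

lemma mhead_mem_of_inShape {sh : List ℕ} (hS : IsMVT n sh S) (h : InShape sh r c) :
    mhead (S r c) ∈ S r c :=
  mhead_mem (hS.1 r c h)

lemma mhead_bound {sh : List ℕ} (hS : IsMVT n sh S) (h : InShape sh r c) :
    1 ≤ mhead (S r c) ∧ mhead (S r c) ≤ n :=
  hS.2.2.1 r c _ (hS.mhead_mem_of_inShape h)

lemma hook_column_strictMonoOn (hk : 0 < k) (hS : IsMVT n (hookShape k a) S) :
    StrictMonoOn (fun r => mhead (S r 0)) (Set.Iio k) :=
  strictMonoOn_of_lt_succ Set.ordConnected_Iio fun r _ _ hr => by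
    rw [Set.mem_Iio, Order.succ_eq_add_one] at hr
    rw [Order.succ_eq_add_one]
    have inShape_column {r} (hr : r < k) : InShape (hookShape k a) r 0 :=
      (inShape_hookShape hk).mpr (.inl ⟨rfl, hr⟩)
    exact hS.2.2.2.2 r 0 (inShape_column hr) _ (hS.mhead_mem_of_inShape (inShape_column (by omega)))
      _ (hS.mhead_mem_of_inShape (inShape_column hr))

lemma hook_row_monotoneOn (hk : 0 < k) (hS : IsMVT n (hookShape k a) S) :
    MonotoneOn (fun c => mhead (S 0 c)) (Set.Iic a) :=
  monotoneOn_of_le_succ Set.ordConnected_Iic fun c _ _ hc => by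
    rw [Set.mem_Iic, Order.succ_eq_add_one] at hc
    rw [Order.succ_eq_add_one]
    have inShape_row {c} (hc : c ≤ a) : InShape (hookShape k a) 0 c :=
      (inShape_hookShape hk).mpr (by omega)
    exact hS.2.2.2.1 0 c (inShape_row hc) _ (hS.mhead_mem_of_inShape (inShape_row (by omega))) _
      (hS.mhead_mem_of_inShape (inShape_row hc))

end IsMVT

def psiInv (k a : ℕ) (S : ℕ → ℕ → Multiset ℕ) : ℕ → ℕ → Multiset ℕ :=
  mkColumn k (fun r => mhead (S r 0)) ((List.range a).map fun c => mhead (S 0 (c + 1)))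

section PsiInv

variable {n k a : ℕ} {S T : ℕ → ℕ → Multiset ℕ}

lemma hook_row_sorted (hk : 0 < k) (hS : IsMVT n (hookShape k a) S) :
    ((List.range a).map fun c => mhead (S 0 (c + 1))).Pairwise (· ≤ ·) := by
  rw [List.pairwise_map]
  refine List.pairwise_lt_range.imp_of_mem fun {c c'} _ hc' hcc' => ?_
  have := List.mem_range.mp hc'
  exact hS.hook_row_monotoneOn hk (by simp; omega) (by simp; omega) (by omega)

lemma hook_column_le_row (hk : 0 < k) (hS : IsMVT n (hookShape k a) S) :
    ∀ x ∈ ((List.range a).map fun c => mhead (S 0 (c + 1)) : Multiset ℕ), mhead (S 0 0) ≤ x := by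
  simp only [Multiset.mem_coe, List.mem_map, List.mem_range]
  rintro _ ⟨c, hc, rfl⟩
  exact hS.hook_row_monotoneOn hk (by simp) (by simp; omega) (Nat.zero_le _)

lemma psiInv_isMVT (hk : 0 < k) (hS : IsMVT n (hookShape k a) S) :
    IsMVT n (List.replicate k 1) (psiInv k a S) := by
  refine mkColumn_isMVT (hS.hook_column_strictMonoOn hk) (hook_column_le_row hk hS)
    (fun r hr => hS.mhead_bound ((inShape_hookShape hk).mpr (.inl ⟨rfl, hr⟩))) ?_
  simp only [Multiset.mem_coe, List.mem_map, List.mem_range]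
  rintro _ ⟨c, hc, rfl⟩
  exact (hS.mhead_bound ((inShape_hookShape hk).mpr (.inr ⟨rfl, c.succ_pos, hc⟩))).2

lemma colEntries_psiInv (hk : 0 < k) : colEntries (psiInv k a S) k = k + a := by
  simp [psiInv, colEntries_mkColumn hk]

lemma extras_psiInv (hk : 0 < k) (hS : IsMVT n (hookShape k a) S) :
    extras (psiInv k a S) k = (List.range a).map fun c => mhead (S 0 (c + 1)) :=
  (Multiset.coe_eq_coe.mp (coe_extras_mkColumn (m := fun r => mhead (S r 0)) hk
    (hook_column_le_row hk hS))).eq_of_pairwise'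
    (Multiset.pairwise_sort _ _) (hook_row_sorted hk hS)

lemma psi_psiInv (hk : 0 < k) (hS : IsMVT n (hookShape k a) S)
    (hS1 : ∀ r c, InShape (hookShape k a) r c → Multiset.card (S r c) = 1) :
    psi k (psiInv k a S) = S := by
  funext r c
  by_cases h : InShape (hookShape k a) r c
  · rw [eq_singleton_mhead (hS1 r c h)]
    rcases (inShape_hookShape hk).mp h with ⟨rfl, hr⟩ | ⟨rfl, hc, hca⟩
    · rw [psi_column hr, psiInv,
        minEntry_mkColumn (m := fun r => mhead (S r 0)) (hook_column_le_row hk hS) hr]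
    · obtain ⟨c, rfl⟩ := Nat.exists_eq_add_of_lt hc
      rw [zero_add] at hca ⊢
      rw [psi_row (colEntries_psiInv hk) hca, extras_psiInv hk hS,
        List.getD_eq_getElem _ _ (by simpa using hca)]
      simp
  · rw [psi_eq_zero hk (colEntries_psiInv hk) h, hS.2.1 r c h]

lemma psiInv_psi (hk : 0 < k) (hT : IsMVT n (List.replicate k 1) T)
    (hE : colEntries T k = k + a) : psiInv k a (psi k T) = T := by
  have hrow : ((List.range a).map fun c => mhead (psi k T 0 (c + 1))) = extras T k := by
    rw [← List.map_getD_range_length (extras T k) 0, hT.extras_length hE]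
    exact List.map_congr_left fun c hc => by
      rw [psi_row hE (List.mem_range.mp hc), mhead_singleton]
  rw [psiInv, mhead_psi_column hk hT, hrow]
  exact hT.eq_mkColumn.symm

end PsiInv

/-- The map `ψ` is a bijection from the multiset-valued tableaux of
single-column shape `1^k` with entries at most `n` and excess `a` onto the semistandard
Young tableaux (all boxes singletons) of hook shape `(a+1, 1^{k-1})` with entries at most
`n`, and it preserves reading words. -/
theorem mvt_column_hook_bijection (n k a : ℕ) (hk : 0 < k) :
    (∀ T, IsMVT n (List.replicate k 1) T → colEntries T k = k + a →
      IsMVT n (hookShape k a) (psi k T) ∧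
      (∀ r c, InShape (hookShape k a) r c → Multiset.card (psi k T r c) = 1) ∧
      mvtWord (hookShape k a) (psi k T) = mvtWord (List.replicate k 1) T) ∧
    Set.BijOn (psi k)
      {T | IsMVT n (List.replicate k 1) T ∧ colEntries T k = k + a}
      {S | IsMVT n (hookShape k a) S ∧
        ∀ r c, InShape (hookShape k a) r c → Multiset.card (S r c) = 1} := by
  refine ⟨fun T hT hE => ⟨psi_isMVT hk hT hE, fun _ _ => card_psi hk hE, ?_⟩,
    Set.InvOn.bijOn (f' := psiInv k a) ⟨?_, ?_⟩ ?_ ?_⟩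
  · rw [mvtWord_psi hk hT hE, mvtWord_column hk fun _ => hT.column_ne_zero, hT.extras_eq_flatten]
  · exact fun T ⟨hT, hE⟩ => psiInv_psi hk hT hE
  · exact fun S ⟨hS, hS1⟩ => psi_psiInv hk hS hS1
  · exact fun T ⟨hT, hE⟩ => ⟨psi_isMVT hk hT hE, fun _ _ => card_psi hk hE⟩
  · exact fun S ⟨hS, _⟩ => ⟨psiInv_isMVT hk hS, colEntries_psiInv hk⟩
end

section
/- Every highest weight multiset-valued tableau of shape λ (i.e., one killed by all raising operators e_i) has the property that its i-th row contains only entries equal to i. -/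
namespace Signature

def sigStep (i : ℕ) (pm : ℕ × ℕ) (a : ℕ) : ℕ × ℕ :=
  if a = i then (if 0 < pm.2 then (pm.1, pm.2 - 1) else (pm.1 + 1, pm.2))
  else if a = i + 1 then (pm.1, pm.2 + 1) else pm

/-- Concatenating `+^p -^m` with `+^p' -^m'` cancels `min m p'` pairs `-+`; this is the
product of the bicyclic monoid. -/
def sigMerge (x y : ℕ × ℕ) : ℕ × ℕ :=
  (x.1 + (y.1 - min x.2 y.1), x.2 - min x.2 y.1 + y.2)

theorem sigMerge_assoc (x y z : ℕ × ℕ) :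
    sigMerge (sigMerge x y) z = sigMerge x (sigMerge y z) := by
  simp only [sigMerge, Prod.mk.injEq]
  omega

theorem sigStep_eq_sigMerge (i a : ℕ) (x : ℕ × ℕ) :
    sigStep i x a = sigMerge x (sigStep i (0, 0) a) := by
  obtain ⟨p, m⟩ := x
  unfold sigStep sigMerge
  split_ifs <;> simp only [Prod.mk.injEq] <;> omega

theorem sigFold_eq (i : ℕ) (w : List ℕ) : sigFold i w = w.foldl (sigStep i) (0, 0) := rfl

theorem foldl_sigStep (i : ℕ) (w : List ℕ) (x : ℕ × ℕ) :
    w.foldl (sigStep i) x = sigMerge x (sigFold i w) := by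
  induction w generalizing x with
  | nil => simp [sigFold, sigMerge]
  | cons a t ih =>
    rw [sigFold_eq, List.foldl_cons, List.foldl_cons, ih, ih, sigStep_eq_sigMerge i a x,
      sigMerge_assoc]

theorem sigFold_append (i : ℕ) (u v : List ℕ) :
    sigFold i (u ++ v) = sigMerge (sigFold i u) (sigFold i v) := by
  rw [sigFold_eq, List.foldl_append, ← sigFold_eq, foldl_sigStep]

theorem sigFold_cons (i a : ℕ) (w : List ℕ) :
    sigFold i (a :: w) = sigMerge (sigStep i (0, 0) a) (sigFold i w) :=
  foldl_sigStep i w _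

theorem sigFold_fst_add_count (i : ℕ) (w : List ℕ) :
    (sigFold i w).1 + w.count (i + 1) = (sigFold i w).2 + w.count i := by
  induction w with
  | nil => rfl
  | cons a t ih =>
    rw [sigFold_cons, List.count_cons, List.count_cons]
    unfold sigStep sigMerge
    by_cases hi : a = i
    · subst hi; simp; omega
    · by_cases hi' : a = i + 1
      · subst hi'; simp; omega
      · simp [hi, hi']; omega

theorem snd_le_sigFold_of_suffix (i : ℕ) {s w : List ℕ} (h : s <:+ w) :
    (sigFold i s).2 ≤ (sigFold i w).2 := by
  obtain ⟨u, rfl⟩ := h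
  rw [sigFold_append, sigMerge]
  omega

theorem exists_uncanceled_minus (i : ℕ) (w : List ℕ) (h : 0 < (sigFold i w).2) :
    ∃ j, w[j]? = some (i + 1) ∧ (sigFold i (w.drop (j + 1))).1 = 0 := by
  induction w with
  | nil => simp [sigFold] at h
  | cons a t ih =>
    rw [sigFold_cons] at h
    by_cases hfirst : a = i + 1 ∧ (sigFold i t).1 = 0
    · exact ⟨0, by simp [hfirst.1], by simpa using hfirst.2⟩
    · have ht : 0 < (sigFold i t).2 := by
        unfold sigStep sigMerge at h
        split_ifs at h <;> simp only at h <;> omega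
      obtain ⟨j, hj, hdrop⟩ := ih ht
      exact ⟨j + 1, by simpa using hj, by simpa using hdrop⟩

theorem ePos_ne_none (i : ℕ) (w : List ℕ) (h : 0 < (sigFold i w).2) : ePos i w ≠ none := by
  obtain ⟨j, hj, hdrop⟩ := exists_uncanceled_minus i w h
  have hlt : j < w.length := (List.getElem?_eq_some_iff.mp hj).1
  unfold ePos
  rw [Ne, List.head?_eq_none_iff]
  exact List.ne_nil_of_mem (List.mem_filter.mpr ⟨List.mem_range.mpr hlt, by simp [hj, hdrop]⟩)

theorem ePos_ne_none_of_suffix (i : ℕ) {s w : List ℕ} (hsw : s <:+ w)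
    (hs : s.count i < s.count (i + 1)) : ePos i w ≠ none := by
  have := sigFold_fst_add_count i s
  exact ePos_ne_none i w (lt_of_lt_of_le (by omega) (snd_le_sigFold_of_suffix i hsw))

end Signature

section Shape

variable {lam : List ℕ}

theorem List.getD_antitone_of_pairwise_ge (hl : lam.Pairwise (· ≥ ·)) {r r' : ℕ}
    (h : r ≤ r') :
    lam.getD r' 0 ≤ lam.getD r 0 := by
  rcases lt_or_ge r' lam.length with hr' | hr'
  · rw [List.getD_eq_getElem _ _ hr', List.getD_eq_getElem _ _ (by omega)]
    exact hl.rel_get_of_le (a := ⟨r, by omega⟩) (b := ⟨r', hr'⟩) h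
  · rw [List.getD_eq_default _ _ hr']
    exact Nat.zero_le _

theorem InShape.of_le_row (hl : lam.Pairwise (· ≥ ·)) {r r' c : ℕ} (h : InShape lam r' c)
    (hr : r ≤ r') : InShape lam r c :=
  lt_of_lt_of_le h (List.getD_antitone_of_pairwise_ge hl hr)

theorem InShape.lt_headD (hl : lam.Pairwise (· ≥ ·)) {r c : ℕ} (h : InShape lam r c) :
    c < lam.headD 0 := by
  have h0 : InShape lam 0 c := h.of_le_row hl (Nat.zero_le r)
  cases lam <;> simp_all [InShape]

theorem InShape.lt_colHeight (hl : lam.Pairwise (· ≥ ·)) {r c : ℕ} (h : InShape lam r c) :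
    r < colHeight lam c := by
  have hr : r < lam.length := by
    by_contra hr
    rw [InShape, List.getD_eq_default _ _ (by omega)] at h
    omega
  have hfilter : (lam.take (r + 1)).filter (fun p => decide (c < p)) = lam.take (r + 1) := by
    refine List.filter_eq_self.2 fun a ha => ?_
    obtain ⟨j, hj, rfl⟩ := List.mem_take_iff_getElem.1 ha
    have := List.getD_antitone_of_pairwise_ge hl (show j ≤ r by omega)
    rw [List.getD_eq_getElem lam 0 (show j < lam.length by omega)] at this
    simpa using lt_of_lt_of_le h this
  calc r < (lam.take (r + 1)).length := by simp; omega
    _ = ((lam.take (r + 1)).filter (fun p => decide (c < p))).length := by rw [hfilter]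
    _ ≤ colHeight lam c := ((List.take_sublist _ _).filter _).length_le

end Shape

namespace IsMVT

variable {n : ℕ} {lam : List ℕ} {T : ℕ → ℕ → Multiset ℕ}

theorem inShape_of_mem_s3 (hT : IsMVT n lam T) {r c x : ℕ} (hx : x ∈ T r c) : InShape lam r c := by
  by_contra hs
  rw [hT.2.1 r c hs] at hx
  exact Multiset.notMem_zero x hx

theorem le_of_mem_of_lt_col (hT : IsMVT n lam T) {r c c' x y : ℕ} (hc : c < c')
    (hx : x ∈ T r c) (hy : y ∈ T r c') : x ≤ y := by
  induction c', hc using Nat.le_induction generalizing y with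
  | base => exact hT.2.2.2.1 r c (hT.inShape_of_mem_s3 hy) x hx y hy
  | succ c' hc ih =>
    have hshape := hT.inShape_of_mem_s3 hy
    obtain ⟨z, hz⟩ := Multiset.exists_mem_of_ne_zero (hT.1 r c' (by unfold InShape at *; omega))
    exact le_trans (ih hz) (hT.2.2.2.1 r c' hshape z hz y hy)

theorem lt_of_mem_of_lt_row (hl : lam.Pairwise (· ≥ ·)) (hT : IsMVT n lam T) {r r' c x y : ℕ}
    (hr : r < r') (hx : x ∈ T r c) (hy : y ∈ T r' c) : x < y := by
  induction r', hr using Nat.le_induction generalizing y with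
  | base => exact hT.2.2.2.2 r c (hT.inShape_of_mem_s3 hy) x hx y hy
  | succ r' hr ih =>
    have hshape := hT.inShape_of_mem_s3 hy
    obtain ⟨z, hz⟩ :=
      Multiset.exists_mem_of_ne_zero (hT.1 r' c (hshape.of_le_row hl (by omega)))
    exact lt_trans (ih hz) (hT.2.2.2.2 r' c hshape z hz y hy)

theorem row_succ_le_of_mem (hl : lam.Pairwise (· ≥ ·)) (hT : IsMVT n lam T) {r c x : ℕ}
    (hx : x ∈ T r c) : r + 1 ≤ x := by
  induction r generalizing x with
  | zero => exact (hT.2.2.1 0 c x hx).1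
  | succ r ih =>
    obtain ⟨z, hz⟩ := Multiset.exists_mem_of_ne_zero
      (hT.1 r c ((hT.inShape_of_mem_s3 hx).of_le_row hl (by omega)))
    have := hT.lt_of_mem_of_lt_row hl (Nat.lt_succ_self r) hz hx
    have := ih hz
    omega

theorem eq_of_mem_of_le_col (hl : lam.Pairwise (· ≥ ·)) (hT : IsMVT n lam T) {i r c : ℕ}
    (hrow : ∀ r' c', i ∈ T r' c' → r' + 1 = i) (hv : i + 1 ∈ T r c) (hri : r + 1 ≤ i)
    {r' c' : ℕ} (hc : c ≤ c') (hi : i ∈ T r' c') : r' = r ∧ c' = c := by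
  have hr' := hrow r' c' hi
  rcases hc.eq_or_lt with rfl | hlt
  · refine ⟨?_, rfl⟩
    by_contra hne
    have := hT.lt_of_mem_of_lt_row hl (show r < r' by omega) hv hi
    omega
  · exfalso
    rcases (show r ≤ r' by omega).eq_or_lt with rfl | hrr
    · have := hT.le_of_mem_of_lt_col hlt hv hi
      omega
    · obtain ⟨z, hz⟩ := Multiset.exists_mem_of_ne_zero
        (hT.1 r c' ((hT.inShape_of_mem_s3 hi).of_le_row hl hrr.le))
      have := hT.le_of_mem_of_lt_col hlt hv hz
      have := hT.lt_of_mem_of_lt_row hl hrr hz hi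
      omega

end IsMVT

theorem List.mem_drop_one_of_lt {α : Type*} [Preorder α] {l : List α}
    (hl : l.Pairwise (· ≤ ·)) {a b : α} (ha : a ∈ l) (hb : b ∈ l) (hab : a < b) :
    b ∈ l.drop 1 := by
  cases l with
  | nil => simp at ha
  | cons x t =>
    rcases List.mem_cons.1 hb with rfl | hb
    · rcases List.mem_cons.1 ha with rfl | ha
      · exact absurd hab (lt_irrefl a)
      · exact absurd (List.rel_of_pairwise_cons hl ha) (not_le_of_gt hab)
    · simpa using hb

theorem List.exists_suffix_flatten_map_range {α : Type*} (f : ℕ → List α) {k n : ℕ}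
    (hk : k < n) {t : List α} (ht : t <:+ f k) :
    ∃ rest, t ++ rest <:+ ((List.range n).map f).flatten ∧
      ∀ y ∈ rest, ∃ j, k < j ∧ y ∈ f j := by
  obtain ⟨u, hu⟩ := ht
  refine ⟨((List.range' (k + 1) (n - (k + 1))).map f).flatten,
    ⟨((List.range k).map f).flatten ++ u, ?_⟩, ?_⟩
  · have hrange : List.range n = List.range k ++ k :: List.range' (k + 1) (n - (k + 1)) := by
      rw [List.range_eq_range', List.range_eq_range', ← List.range'_succ,
        List.range'_eq_append_iff]
      exact ⟨k, hk.le, rfl, by congr 1 <;> omega⟩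
    simp [hrange, ← hu]
  · intro y hy
    obtain ⟨l, hl, hyl⟩ := List.mem_flatten.1 hy
    obtain ⟨j, hj, rfl⟩ := List.mem_map.1 hl
    exact ⟨j, (List.mem_range'_1.1 hj).1, hyl⟩

section ReadingWord

variable {sh : List ℕ} {T : ℕ → ℕ → Multiset ℕ}

theorem exists_mem_of_mem_colWord {c y : ℕ} (h : y ∈ colWord sh T c) : ∃ r, y ∈ T r c := by
  unfold colWord at h
  rcases List.mem_append.1 h with h | h <;>
  · obtain ⟨l, hl, hy⟩ := List.mem_flatten.1 h
    obtain ⟨r, -, rfl⟩ := List.mem_map.1 hl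
    refine ⟨r, (Multiset.mem_sort (· ≤ ·)).1 ?_⟩
    first
      | exact List.mem_of_mem_take hy
      | exact List.mem_of_mem_drop hy

theorem mem_colWord {r c y : ℕ} (hr : r < colHeight sh c) (hy : y ∈ T r c) :
    y ∈ colWord sh T c := by
  have hy' : y ∈ msort (T r c) := (Multiset.mem_sort _).2 hy
  rw [← List.take_append_drop 1 (msort (T r c))] at hy'
  unfold colWord
  rcases List.mem_append.1 hy' with h | h
  · refine List.mem_append_left _ (List.mem_flatten.2 ⟨_, List.mem_map.2 ⟨r, ?_, rfl⟩, h⟩)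
    simpa using hr
  · refine List.mem_append_right _ (List.mem_flatten.2 ⟨_, List.mem_map.2 ⟨r, ?_, rfl⟩, h⟩)
    simpa using hr

theorem exists_suffix_colWord {i r c : ℕ} (hr : r < colHeight sh c) (hv : i + 1 ∈ T r c)
    (honly : ∀ r', i ∈ T r' c → r' = r) :
    ∃ t, t <:+ colWord sh T c ∧ i + 1 ∈ t ∧ i ∉ t := by
  by_cases hi : i ∈ T r c
  · have hsorted : (msort (T r c)).Pairwise (· ≤ ·) := Multiset.pairwise_sort _ _
    have htail : i + 1 ∈ (msort (T r c)).drop 1 := List.mem_drop_one_of_lt hsorted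
      ((Multiset.mem_sort _).2 hi) ((Multiset.mem_sort _).2 hv) (Nat.lt_succ_self i)
    obtain ⟨u, v, huv⟩ := List.append_of_mem htail
    have hv_ge : ∀ y ∈ v, i + 1 ≤ y := by
      have := hsorted.sublist (List.drop_sublist 1 _)
      rw [huv, List.pairwise_append, List.pairwise_cons] at this
      exact this.2.1.1
    obtain ⟨rest, hsuf, hrest⟩ := List.exists_suffix_flatten_map_range
      (fun r' => (msort (T r' c)).drop 1) hr (t := (i + 1) :: v) ⟨u, huv.symm⟩
    refine ⟨_, hsuf.trans (List.suffix_append _ _), by simp, ?_⟩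
    simp only [List.cons_append, List.mem_cons, List.mem_append, not_or]
    refine ⟨by omega, fun h => by have := hv_ge i h; omega, fun h => ?_⟩
    obtain ⟨j, hj, hij⟩ := hrest i h
    have := honly j ((Multiset.mem_sort _).1 (List.mem_of_mem_drop hij))
    omega
  · refine ⟨colWord sh T c, List.suffix_refl _, mem_colWord hr hv, fun h => ?_⟩
    obtain ⟨r', h'⟩ := exists_mem_of_mem_colWord h
    exact hi (honly r' h' ▸ h')

theorem exists_suffix_mvtWord {i r c : ℕ} (hc : c < sh.headD 0) (hr : r < colHeight sh c)
    (hv : i + 1 ∈ T r c) (honly : ∀ r' c', c ≤ c' → i ∈ T r' c' → r' = r ∧ c' = c) :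
    ∃ s, s <:+ mvtWord sh T ∧ i + 1 ∈ s ∧ i ∉ s := by
  obtain ⟨t, ht, hvt, hit⟩ := exists_suffix_colWord hr hv (fun r' h => (honly r' c le_rfl h).1)
  obtain ⟨rest, hsuf, hrest⟩ := List.exists_suffix_flatten_map_range (colWord sh T) hc ht
  refine ⟨t ++ rest, hsuf, List.mem_append_left _ hvt, fun h => ?_⟩
  rcases List.mem_append.1 h with h | h
  · exact hit h
  · obtain ⟨j, hj, hij⟩ := hrest i h
    obtain ⟨r', h'⟩ := exists_mem_of_mem_colWord hij
    have := (honly r' j hj.le h').2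
    omega

theorem mvtE_eq_none_iff (i : ℕ) : mvtE sh i T = none ↔ ePos i (mvtWord sh T) = none := by
  unfold mvtE
  exact Option.map_eq_none_iff

end ReadingWord

/-- Every highest weight multiset-valued tableau of shape `λ` has all
entries of its `i`-th row (1-indexed) equal to `i`. -/
theorem mvt_highest_weight_rows
    (n : ℕ) (lam : List ℕ) (hlam : IsPartition lam)
    (T : ℕ → ℕ → Multiset ℕ) (hT : IsMVT n lam T) (hhw : MvtHW lam T) :
    ∀ r c, InShape lam r c → ∀ x ∈ T r c, x = r + 1 := by
  have hl := hlam.1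
  intro r c _ x hx
  induction x using Nat.strong_induction_on generalizing r c with
  | _ v IH =>
  have hge := hT.row_succ_le_of_mem hl hx
  by_contra hne
  obtain ⟨i, rfl⟩ : ∃ i, v = i + 1 := ⟨v - 1, by omega⟩
  have hrow : ∀ r' c', i ∈ T r' c' → r' + 1 = i := fun r' c' h =>
    (IH i (by omega) r' c' (hT.inShape_of_mem_s3 h) h).symm
  have hshape := hT.inShape_of_mem_s3 hx
  obtain ⟨s, hsw, hvs, his⟩ := exists_suffix_mvtWord (hshape.lt_headD hl)
    (hshape.lt_colHeight hl) hx fun _ _ hc hi => hT.eq_of_mem_of_le_col hl hrow hx (by omega) hc hi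
  have hcount : s.count i < s.count (i + 1) := by
    rw [List.count_eq_zero.2 his]
    exact List.count_pos_iff.2 hvs
  exact Signature.ePos_ne_none_of_suffix i hsw hcount ((mvtE_eq_none_iff i).1 (hhw i (by omega)))
end
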